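/- arXiv:1208.1627 — 6 statements merged into one kernel-verified Lean document; each statement's English description precedes it below -/
import Mathlib

section
/- Let q be a power of a prime and let F be the finite field with q² elements. For a, b ∈ F set c = a^(q+1) + b^q + b. Then the non-vertical line {(x,y) : y = a·x + b} intersects the Hermitian curve H in exactly 1 point if c = 0, and in exactly q+1 points if c ≠ 0. Moreover, the number of pairs (a,b) ∈ F × F with a^(q+1) + b^q + b = 0 is exactly q³, so exactly q³ of the q⁴ non-vertical lines are tangent to H and the remaining q⁴ − q³ lines intersect H in q+1 points. -/
/-!
Write `x̄ = x ^ q`; since `|F| = q²`, this is a field automorphism of order two.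
Substituting `y = a x + b` into `x^(q+1) = ȳ + y` and completing the norm gives
`(x - ā)^(q+1) = c` with `c = a^(q+1) + b̄ + b`, and `c̄ = c`. So the line meets `H` in a
translate of the fibre of the norm `u ↦ u^(q+1)` over `c`: that is `{0}` if `c = 0`, and
otherwise `q + 1` points, because on the cyclic group `Fˣ` of order `(q+1)(q-1)` the norm
has kernel of order `q + 1` and image `{c | c^(q-1) = 1}`.

The line is tangent iff `b̄ + b = -a^(q+1)`. The trace `b ↦ b̄ + b` is additive, and its
kernel (roots of `X^q + X`) and image (inside the roots of `X^q - X`) have at most `q`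
elements each, hence exactly `q`. So the image is the whole fixed field, every fibre over it
has `q` points, and there are `q² · q` tangent lines.
-/

open Polynomial

@[to_additive]
theorem MonoidHom.natCard_fiber_eq_natCard_ker {G M : Type*} [Group G] [Finite G] [Monoid M]
    (f : G →* M) {x : M} (hx : x ∈ Set.range f) : Nat.card {g // f g = x} = Nat.card f.ker := by
  classical
  have := Fintype.ofFinite G
  rw [Nat.card_eq_fintype_card, Fintype.card_subtype,
    MonoidHom.card_fiber_eq_of_mem_range f hx ⟨1, map_one f⟩, ← Fintype.card_subtype,
    ← Nat.card_eq_fintype_card]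
  rfl

theorem Polynomial.ncard_setOf_eval_eq_zero_le {R : Type*} [CommRing R] [IsDomain R] {f : R[X]}
    (hf : f ≠ 0) : {x | f.eval x = 0}.ncard ≤ f.natDegree := by
  convert f.ncard_rootSet_le R
  ext x
  simp [mem_rootSet, hf]

theorem IsCyclic.range_powMonoidHom_eq_ker {G : Type*} [CommGroup G] [IsCyclic G] [Finite G]
    {d e : ℕ} (hG : Nat.card G = d * e) :
    (powMonoidHom d : G →* G).range = (powMonoidHom e).ker := by
  have hd : 0 < d := Nat.pos_of_mul_pos_right (hG ▸ Nat.card_pos)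
  refine Subgroup.eq_of_le_of_card_ge ?_ ?_
  · rintro _ ⟨u, rfl⟩
    simp [← pow_mul, ← hG, pow_card_eq_one']
  · rw [card_powMonoidHom_ker, card_powMonoidHom_range, hG, Nat.gcd_mul_left_left,
      Nat.gcd_mul_right_left, Nat.mul_div_cancel_left _ hd]

namespace FiniteField

variable {K : Type*} [Field K] [Fintype K]

theorem ncard_setOf_pow_eq_of_pow_eq_one {d e : ℕ} (hde : Fintype.card K - 1 = d * e) {c : K}
    (hc : c ^ e = 1) : {u : K | u ^ d = c}.ncard = d := by
  have hunits : Nat.card Kˣ = d * e := by rw [Nat.card_units, Nat.card_eq_fintype_card, hde]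
  have hd : 0 < d := Nat.pos_of_mul_pos_right (hunits ▸ Nat.card_pos)
  have he : 0 < e := Nat.pos_of_mul_pos_left (hunits ▸ Nat.card_pos)
  have hc0 : c ≠ 0 := by rintro rfl; simp [he.ne'] at hc
  have hmem : Units.mk0 c hc0 ∈ Set.range (powMonoidHom d : Kˣ →* Kˣ) := by
    rw [← MonoidHom.coe_range, IsCyclic.range_powMonoidHom_eq_ker hunits]
    simpa [Units.ext_iff] using hc
  have hset : {u : K | u ^ d = c} = Units.val '' {u : Kˣ | u ^ d = Units.mk0 c hc0} := by
    ext x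
    refine ⟨fun hx => ⟨Units.mk0 x ?_, ?_, rfl⟩, ?_⟩
    · rintro rfl; exact hc0 (by simpa [hd.ne'] using hx.symm)
    · simpa [Units.ext_iff] using hx
    · rintro ⟨u, hu, rfl⟩; simpa [Units.ext_iff] using hu
  rw [hset, Set.ncard_image_of_injective _ Units.val_injective, ← Nat.card_coe_set_eq]
  refine (MonoidHom.natCard_fiber_eq_natCard_ker _ hmem).trans ?_
  rw [IsCyclic.card_powMonoidHom_ker, hunits, Nat.gcd_mul_right_left]

end FiniteField

namespace HermitianCurve

variable {F : Type*} [Field F] [Fintype F] {q : ℕ}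

theorem one_lt_of_card_eq_sq (hF : Fintype.card F = q ^ 2) : 1 < q := by
  have := hF ▸ Fintype.one_lt_card (α := F)
  by_contra! h
  interval_cases q <;> simp at this

theorem add_pow_of_card_eq_sq (hF : Fintype.card F = q ^ 2) (x y : F) :
    (x + y) ^ q = x ^ q + y ^ q := by
  obtain ⟨p, _⟩ := CharP.exists F
  obtain ⟨n, hp, hcard⟩ := FiniteField.card F p
  have : Fact p.Prime := ⟨hp⟩
  have hdvd : q ∣ p ^ (n : ℕ) := Dvd.intro q ((sq q).symm.trans <| hF.symm.trans hcard)
  obtain ⟨m, -, rfl⟩ := (Nat.dvd_prime_pow hp).1 hdvd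
  exact add_pow_char_pow x y p m

def conj (hF : Fintype.card F = q ^ 2) : F →+* F where
  toFun x := x ^ q
  map_one' := one_pow q
  map_mul' x y := mul_pow x y q
  map_zero' := zero_pow (Nat.ne_zero_of_lt (one_lt_of_card_eq_sq hF))
  map_add' := add_pow_of_card_eq_sq hF

@[simp]
theorem conj_apply (hF : Fintype.card F = q ^ 2) (x : F) : conj hF x = x ^ q := rfl

theorem pow_pow_of_card_eq_sq (hF : Fintype.card F = q ^ 2) (x : F) : (x ^ q) ^ q = x := by
  rw [← pow_mul, ← sq, ← hF, FiniteField.pow_card]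

theorem pow_succ_pow_of_card_eq_sq (hF : Fintype.card F = q ^ 2) (x : F) :
    (x ^ (q + 1)) ^ q = x ^ (q + 1) := by
  rw [pow_right_comm, pow_succ, pow_pow_of_card_eq_sq hF, mul_comm, ← pow_succ]

theorem line_eq_iff_sub_pow_succ_eq (hF : Fintype.card F = q ^ 2) (a b x : F) :
    x ^ (q + 1) = (a * x + b) ^ q + (a * x + b) ↔
      (x - a ^ q) ^ (q + 1) = a ^ (q + 1) + b ^ q + b := by
  have hline : (a * x + b) ^ q = a ^ q * x ^ q + b ^ q := by
    simpa [mul_pow] using map_add (conj hF) (a * x) b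
  have hshift : (x - a ^ q) ^ q = x ^ q - a := by
    simpa [pow_pow_of_card_eq_sq hF] using map_sub (conj hF) x (a ^ q)
  rw [hline, pow_succ (x - a ^ q), hshift]
  constructor <;> intro h <;> linear_combination h

theorem ncard_line_inter_eq_ncard_pow_succ_eq (hF : Fintype.card F = q ^ 2) (a b : F) :
    {p : F × F | p.1 ^ (q + 1) = p.2 ^ q + p.2 ∧ p.2 = a * p.1 + b}.ncard =
      {u : F | u ^ (q + 1) = a ^ (q + 1) + b ^ q + b}.ncard := by
  have hset : {p : F × F | p.1 ^ (q + 1) = p.2 ^ q + p.2 ∧ p.2 = a * p.1 + b} =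
      (fun u => (u + a ^ q, a * (u + a ^ q) + b)) ''
        {u | u ^ (q + 1) = a ^ (q + 1) + b ^ q + b} := by
    ext ⟨x, y⟩
    simp only [Set.mem_ofPred_eq, Set.mem_image, Prod.mk.injEq]
    constructor
    · rintro ⟨hx, rfl⟩
      exact ⟨x - a ^ q, (line_eq_iff_sub_pow_succ_eq hF a b x).1 hx, sub_add_cancel _ _,
        by simp⟩
    · rintro ⟨u, hu, rfl, rfl⟩
      exact ⟨(line_eq_iff_sub_pow_succ_eq hF a b _).2 (by simpa using hu), rfl⟩
  rw [hset, Set.ncard_image_of_injective _ fun u v h => by simpa using congrArg Prod.fst h]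

theorem ncard_pow_succ_eq_of_pow_eq_self (hF : Fintype.card F = q ^ 2) {c : F} (hc0 : c ≠ 0)
    (hc : c ^ q = c) :
    {u : F | u ^ (q + 1) = c}.ncard = q + 1 := by
  have hq := one_lt_of_card_eq_sq hF
  refine FiniteField.ncard_setOf_pow_eq_of_pow_eq_one (e := q - 1) ?_ ?_
  · rw [hF, ← one_pow 2, Nat.sq_sub_sq, one_pow]
  · refine mul_right_cancel₀ hc0 ?_
    rw [pow_sub_one_mul (by lia), hc, one_mul]

theorem ncard_line_inter_of_eq_zero (hF : Fintype.card F = q ^ 2) {a b : F}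
    (hc : a ^ (q + 1) + b ^ q + b = 0) :
    {p : F × F | p.1 ^ (q + 1) = p.2 ^ q + p.2 ∧ p.2 = a * p.1 + b}.ncard = 1 := by
  simp [ncard_line_inter_eq_ncard_pow_succ_eq hF, hc]

theorem ncard_line_inter_of_ne_zero (hF : Fintype.card F = q ^ 2) {a b : F}
    (hc : a ^ (q + 1) + b ^ q + b ≠ 0) :
    {p : F × F | p.1 ^ (q + 1) = p.2 ^ q + p.2 ∧ p.2 = a * p.1 + b}.ncard = q + 1 := by
  rw [ncard_line_inter_eq_ncard_pow_succ_eq hF]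
  refine ncard_pow_succ_eq_of_pow_eq_self hF hc ?_
  rw [add_pow_of_card_eq_sq hF, add_pow_of_card_eq_sq hF, pow_succ_pow_of_card_eq_sq hF,
    pow_pow_of_card_eq_sq hF, add_right_comm]

theorem ncard_line_inter_eq_one_iff (hF : Fintype.card F = q ^ 2) (a b : F) :
    {p : F × F | p.1 ^ (q + 1) = p.2 ^ q + p.2 ∧ p.2 = a * p.1 + b}.ncard = 1 ↔
      a ^ (q + 1) + b ^ q + b = 0 := by
  refine ⟨fun h => by_contra fun hc => ?_, ncard_line_inter_of_eq_zero hF⟩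
  rw [ncard_line_inter_of_ne_zero hF hc] at h
  have := one_lt_of_card_eq_sq hF
  lia

theorem ncard_line_inter_eq_succ_iff (hF : Fintype.card F = q ^ 2) (a b : F) :
    {p : F × F | p.1 ^ (q + 1) = p.2 ^ q + p.2 ∧ p.2 = a * p.1 + b}.ncard = q + 1 ↔
      a ^ (q + 1) + b ^ q + b ≠ 0 := by
  refine ⟨fun h hc => ?_, ncard_line_inter_of_ne_zero hF⟩
  rw [ncard_line_inter_of_eq_zero hF hc] at h
  have := one_lt_of_card_eq_sq hF
  lia

def trace (hF : Fintype.card F = q ^ 2) : F →+ F :=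
  (conj hF).toAddMonoidHom + AddMonoidHom.id F

theorem trace_apply (hF : Fintype.card F = q ^ 2) (x : F) : trace hF x = x ^ q + x := rfl

theorem natCard_ker_trace_le (hF : Fintype.card F = q ^ 2) : Nat.card (trace hF).ker ≤ q := by
  have hq := one_lt_of_card_eq_sq hF
  have hdeg : (X ^ q + X : F[X]).natDegree = q := by
    rw [natDegree_add_eq_left_of_natDegree_lt] <;> simp [hq]
  have hne : (X ^ q + X : F[X]) ≠ 0 := by
    rintro h
    simp [h] at hdeg
    lia
  calc Nat.card (trace hF).ker = {x : F | (X ^ q + X : F[X]).eval x = 0}.ncard := by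
        simp only [← Nat.card_coe_set_eq, eval_add, eval_pow, eval_X]
        rfl
    _ ≤ q := (ncard_setOf_eval_eq_zero_le hne).trans hdeg.le

theorem ncard_setOf_pow_eq_self_le (hF : Fintype.card F = q ^ 2) :
    {t : F | t ^ q = t}.ncard ≤ q := by
  have hq := one_lt_of_card_eq_sq hF
  have := ncard_setOf_eval_eq_zero_le (FiniteField.X_pow_card_sub_X_ne_zero F hq)
  rw [FiniteField.X_pow_card_sub_X_natDegree_eq F hq] at this
  simpa [sub_eq_zero] using this

theorem range_trace_subset (hF : Fintype.card F = q ^ 2) :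
    Set.range (trace hF) ⊆ {t : F | t ^ q = t} := by
  rintro _ ⟨x, rfl⟩
  simpa [trace_apply, add_comm, pow_pow_of_card_eq_sq hF] using map_add (conj hF) (x ^ q) x

theorem natCard_ker_trace_and_range (hF : Fintype.card F = q ^ 2) :
    Nat.card (trace hF).ker = q ∧ Nat.card (trace hF).range = q := by
  have hprod : Nat.card (trace hF).ker * Nat.card (trace hF).range = q * q := by
    rw [← AddSubgroup.index_ker, AddSubgroup.card_mul_index, Nat.card_eq_fintype_card, hF, sq]
  have hker := natCard_ker_trace_le hF
  have hrange : Nat.card (trace hF).range ≤ q := by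
    rw [← SetLike.coe_sort_coe, Nat.card_coe_set_eq, AddMonoidHom.coe_range]
    exact (Set.ncard_le_ncard (range_trace_subset hF)).trans (ncard_setOf_pow_eq_self_le hF)
  constructor <;> nlinarith

theorem range_trace (hF : Fintype.card F = q ^ 2) :
    Set.range (trace hF) = {t : F | t ^ q = t} := by
  refine Set.eq_of_subset_of_ncard_le (range_trace_subset hF) ?_
  calc {t : F | t ^ q = t}.ncard ≤ q := ncard_setOf_pow_eq_self_le hF
    _ = (Set.range (trace hF)).ncard := by
      rw [← AddMonoidHom.coe_range, ← Nat.card_coe_set_eq]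
      exact (natCard_ker_trace_and_range hF).2.symm

theorem natCard_trace_fiber (hF : Fintype.card F = q ^ 2) {t : F} (ht : t ^ q = t) :
    Nat.card {b : F // b ^ q + b = t} = q :=
  ((trace hF).natCard_fiber_eq_natCard_ker (range_trace hF ▸ ht)).trans
    (natCard_ker_trace_and_range hF).1

theorem natCard_tangent_lines (hF : Fintype.card F = q ^ 2) :
    Nat.card {ab : F × F // ab.1 ^ (q + 1) + ab.2 ^ q + ab.2 = 0} = q ^ 3 := by
  have hfiber (a : F) : Nat.card {b : F // a ^ (q + 1) + b ^ q + b = 0} = q := by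
    have hfix : (-a ^ (q + 1)) ^ q = -a ^ (q + 1) := by
      simpa [pow_succ_pow_of_card_eq_sq hF] using map_neg (conj hF) (a ^ (q + 1))
    refine (Nat.card_congr (Equiv.subtypeEquivRight fun b => ?_)).trans
      (natCard_trace_fiber hF hfix)
    constructor <;> intro h <;> linear_combination h
  rw [Nat.card_congr (Equiv.subtypeProdEquivSigmaSubtype fun a b => a ^ (q + 1) + b ^ q + b = 0),
    Nat.card_sigma]
  simp [hfiber, hF]
  ring

end HermitianCurve

open HermitianCurve

theorem stmt_1_general (q : ℕ) (F : Type*) [Field F] [Fintype F]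
    (hF : Fintype.card F = q ^ 2) :
    (∀ a b : F,
      (a ^ (q + 1) + b ^ q + b = 0 →
        Set.ncard {p : F × F | p.1 ^ (q + 1) = p.2 ^ q + p.2 ∧ p.2 = a * p.1 + b} = 1) ∧
      (a ^ (q + 1) + b ^ q + b ≠ 0 →
        Set.ncard {p : F × F | p.1 ^ (q + 1) = p.2 ^ q + p.2 ∧ p.2 = a * p.1 + b} = q + 1)) ∧
    Nat.card {ab : F × F // ab.1 ^ (q + 1) + ab.2 ^ q + ab.2 = 0} = q ^ 3 ∧
    Nat.card {ab : F × F //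
      Set.ncard {p : F × F | p.1 ^ (q + 1) = p.2 ^ q + p.2 ∧ p.2 = ab.1 * p.1 + ab.2} = 1}
      = q ^ 3 ∧
    Nat.card {ab : F × F //
      Set.ncard {p : F × F | p.1 ^ (q + 1) = p.2 ^ q + p.2 ∧ p.2 = ab.1 * p.1 + ab.2} = q + 1}
      = q ^ 4 - q ^ 3 := by
  refine ⟨fun a b => ⟨ncard_line_inter_of_eq_zero hF, ncard_line_inter_of_ne_zero hF⟩,
    natCard_tangent_lines hF, ?_, ?_⟩
  · rw [← natCard_tangent_lines hF]
    exact Nat.card_congr (Equiv.subtypeEquivRight fun ab => ncard_line_inter_eq_one_iff hF _ _)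
  · classical
    rw [Nat.card_congr (Equiv.subtypeEquivRight fun ab => ncard_line_inter_eq_succ_iff hF _ _),
      Nat.card_eq_fintype_card, Fintype.card_subtype_compl, Fintype.card_prod, hF,
      ← Nat.card_eq_fintype_card, natCard_tangent_lines hF, ← pow_add]

theorem stmt_1 (q : ℕ) (hq : IsPrimePow q) (F : Type*) [Field F] [Fintype F]
    (hF : Fintype.card F = q ^ 2) :
    (∀ a b : F,
      (a ^ (q + 1) + b ^ q + b = 0 →
        Set.ncard {p : F × F | p.1 ^ (q + 1) = p.2 ^ q + p.2 ∧ p.2 = a * p.1 + b} = 1) ∧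
      (a ^ (q + 1) + b ^ q + b ≠ 0 →
        Set.ncard {p : F × F | p.1 ^ (q + 1) = p.2 ^ q + p.2 ∧ p.2 = a * p.1 + b} = q + 1)) ∧
    Nat.card {ab : F × F // ab.1 ^ (q + 1) + ab.2 ^ q + ab.2 = 0} = q ^ 3 ∧
    Nat.card {ab : F × F //
      Set.ncard {p : F × F | p.1 ^ (q + 1) = p.2 ^ q + p.2 ∧ p.2 = ab.1 * p.1 + ab.2} = 1}
      = q ^ 3 ∧
    Nat.card {ab : F × F //
      Set.ncard {p : F × F | p.1 ^ (q + 1) = p.2 ^ q + p.2 ∧ p.2 = ab.1 * p.1 + ab.2} = q + 1}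
      = q ^ 4 - q ^ 3 :=
  stmt_1_general q F hF
end

section
/- Let q be an odd power of a prime and let F be the finite field with q² elements. For every a, b, c ∈ F with a ≠ 0, the cardinality of the set {(x,y) ∈ F×F : x^(q+1) = y^q + y and y = a·x² + b·x + c} belongs to the set {0, 1, q−1, q, q+1, 2q−1, 2q}. -/
/-!
Write `σ x = x ^ q`, `N x = σ x * x` and `Tr y = y + σ y`, and let `K` be the fixed field of `σ`.
Substituting `y = a x² + b x + c` into the equation of `H`, the abscissae of the intersection are
the solutions of `N x = Tr (a x² + b x) + e` with `e = Tr c ∈ K`: a conic over `K` in the plane `F`.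

If `4 a σ(a) = 1`, then `2 (N x - Tr (a x²)) = N (2 a x - σ x)` and `x ↦ 2 a x - σ x` is
`K`-linear of rank one, so the count is `q` times the number of roots of a quadratic
(`0`, `q` or `2 q`), or exactly `q` when `Tr (b x)` does not vanish on its kernel.
Otherwise a translation removes the linear part, and with `δ² = 1 - 4 a σ(a)` the form
`Tr (a x²) - N x` factors into two `K`-linear forms in `x`. If `δ ∈ K` they are conjugate, and the
count is the size `1` or `q + 1` of a fibre of the norm; if `σ δ = -δ` they are independent
coordinates on two `K`-lines of `F`, and the count is that of a hyperbola (`q - 1`) or of a pair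
of crossing lines (`2 q - 1`).
-/

open Polynomial in
lemma Polynomial.ncard_setOf_eval_eq_zero_le_s4 {F : Type*} [Field F] {P : F[X]} (hP : P ≠ 0) :
    {x | P.eval x = 0}.ncard ≤ P.natDegree := by
  classical
  have : {x | P.eval x = 0} = ↑P.roots.toFinset := by ext; simp [hP]
  rw [this, Set.ncard_coe_finset]
  exact (Multiset.toFinset_card_le _).trans P.card_roots'

namespace MonoidHom

variable {G H : Type*} [Group G] [Group H]

@[to_additive]
lemma card_ker_eq_and_range_eq [Finite G] [Finite H] (f : G →* H) {S : Set H} {m n : ℕ}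
    (hS : Set.range f ⊆ S) (hker : Nat.card f.ker ≤ m) (hSn : S.ncard ≤ n)
    (hG : Nat.card G = m * n) : Nat.card f.ker = m ∧ Set.range f = S := by
  have hrange : (Set.range f).ncard ≤ S.ncard := Set.ncard_le_ncard hS
  have hmul : Nat.card f.ker * (Set.range f).ncard = m * n := by
    rw [← hG, ← f.ker.card_mul_index, Subgroup.index_ker, ← coe_range, ← Nat.card_coe_set_eq]
    rfl
  have hpos : 0 < m * n := hG ▸ Nat.card_pos
  have hm : Nat.card f.ker = m := by
    refine le_antisymm hker (Nat.le_of_mul_le_mul_right ?_ (Nat.pos_of_mul_pos_left hpos))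
    calc m * n = Nat.card f.ker * (Set.range f).ncard := hmul.symm
      _ ≤ Nat.card f.ker * n := Nat.mul_le_mul_left _ (hrange.trans hSn)
  refine ⟨hm, Set.eq_of_subset_of_ncard_le hS ?_⟩
  rw [hm] at hmul
  have := Nat.eq_of_mul_eq_mul_left (Nat.pos_of_mul_pos_right hpos) hmul
  omega

@[to_additive]
lemma ncard_setOf_apply_eq (f : G →* H) {x₀ : G} {s : H} (hx₀ : f x₀ = s) :
    {x | f x = s}.ncard = Nat.card f.ker := by
  have : {x | f x = s} = (x₀ * ·) '' f.ker := by
    ext x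
    refine ⟨fun hx => ⟨x₀⁻¹ * x, by simp_all [mem_ker], by simp⟩, ?_⟩
    rintro ⟨y, hy, rfl⟩
    simp_all [mem_ker]
  rw [this, Set.ncard_image_of_injective _ (mul_right_injective x₀), ← Nat.card_coe_set_eq]
  rfl

@[to_additive]
lemma ncard_preimage [Finite G] (f : G →* H) (Z : Set H) :
    (f ⁻¹' Z).ncard = (Z ∩ Set.range f).ncard * Nat.card f.ker := by
  have hfib : ∀ z ∈ Z ∩ Set.range f, (f ⁻¹' {z}).ncard = Nat.card f.ker := by
    rintro z ⟨-, x₀, hx₀⟩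
    exact f.ncard_setOf_apply_eq hx₀
  have : f ⁻¹' Z = ⋃ z ∈ Z ∩ Set.range f, f ⁻¹' {z} := by
    rw [Set.biUnion_preimage_singleton, Set.preimage_inter_range]
  rw [this, (Set.toFinite _).ncard_biUnion (fun _ _ => Set.toFinite _)
    ((Set.pairwiseDisjoint_fiber f _).subset Set.inter_subset_left),
    finsum_mem_congr rfl hfib, ← finsum_one, finsum_mem_mul]
  simp only [one_mul]

end MonoidHom

lemma two_mul_ne_zero_of_four_mul_mul_eq_one {R : Type*} [CommRing R] [Nontrivial R] {a b : R}
    (h : 4 * a * b = 1) : 2 * a ≠ 0 :=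
  left_ne_zero_of_mul_eq_one (b := 2 * b) (by linear_combination h)

lemma one_add_mul_one_sub_ne_zero {F : Type*} [Field F] (h2 : (2 : F) ≠ 0) {a b δ : F}
    (ha : a ≠ 0) (hb : b ≠ 0)
    (hδ : δ * δ = 1 - 4 * a * b) : (1 + δ) * (1 - δ) ≠ 0 := by
  rw [show (1 + δ) * (1 - δ) = 2 * 2 * a * b by linear_combination -hδ]
  exact mul_ne_zero (mul_ne_zero (mul_ne_zero h2 h2) ha) hb

lemma eq_zero_of_linear_factors_eq_zero {F : Type*} [Field F] (h2 : (2 : F) ≠ 0)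
    {a b δ z z' : F} (ha : a ≠ 0) (hb : b ≠ 0) (hδ : δ * δ = 1 - 4 * a * b) (hδ0 : δ ≠ 0)
    (h : 2 * a * z + (δ - 1) * z' = 0) (h' : (δ - 1) * z + 2 * b * z' = 0) : z = 0 := by
  have : (2 * δ * (1 - δ)) * z = 0 := by linear_combination 2 * b * h - (δ - 1) * h' - z * hδ
  exact (mul_eq_zero.mp this).resolve_left (mul_ne_zero (mul_ne_zero h2 hδ0)
    (right_ne_zero_of_mul (one_add_mul_one_sub_ne_zero h2 ha hb hδ)))

structure IsConjugation {F : Type*} [Field F] [Fintype F] (q : ℕ) (σ : F →+* F) : Prop where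
  card_eq : Fintype.card F = q ^ 2
  apply_eq_pow : ∀ x, σ x = x ^ q

namespace IsConjugation

variable {F : Type*} [Field F] [Fintype F] {q : ℕ} {σ : F →+* F}

lemma two_le (hσ : IsConjugation q σ) : 2 ≤ q := by
  have := Fintype.one_lt_card (α := F)
  rw [hσ.card_eq] at this
  nlinarith

lemma apply_apply (hσ : IsConjugation q σ) (x : F) : σ (σ x) = x := by
  rw [hσ.apply_eq_pow, hσ.apply_eq_pow, ← pow_mul, ← sq, ← hσ.card_eq, FiniteField.pow_card]

lemma two_ne_zero_of_odd (hσ : IsConjugation q σ) (hodd : Odd q) : (2 : F) ≠ 0 := by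
  intro h
  have hchar := FiniteField.even_card_iff_char_two.mp (CharP.ringChar_of_prime_eq_zero
    Nat.prime_two (by exact_mod_cast h))
  rw [hσ.card_eq, ← Nat.even_iff, Nat.even_pow' (by norm_num)] at hchar
  exact Nat.not_even_iff_odd.mpr hodd hchar

open Polynomial in
lemma ncard_setOf_mul_apply_add_mul_eq_zero_le (hσ : IsConjugation q σ) (α : F) {β : F}
    (hβ : β ≠ 0) : {x | α * σ x + β * x = 0}.ncard ≤ q := by
  have hq := hσ.two_le
  have hP : C α * X ^ q + C β * X ≠ 0 := fun h => hβ <| by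
    simpa [coeff_X_pow, show 1 ≠ q by omega] using congr_arg (coeff · 1) h
  have hset : {x | α * σ x + β * x = 0} = {x | (C α * X ^ q + C β * X).eval x = 0} := by
    ext; simp [hσ.apply_eq_pow]
  rw [hset]
  refine (ncard_setOf_eval_eq_zero_le_s4 hP).trans ?_
  compute_degree!
  omega

lemma ncard_setOf_mul_apply_eq (hσ : IsConjugation q σ) {β : F} (hβ : β * σ β = 1) :
    {u | β * σ u = u}.ncard = q := by
  set f : F →+ F := (AddMonoidHom.mulLeft β).comp σ.toAddMonoidHom - AddMonoidHom.id F
  have hker : (f.ker : Set F) = {u | β * σ u = u} := by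
    ext u; simp [f, sub_eq_zero]
  have hrange : Set.range f ⊆ {v | β * σ v + 1 * v = 0} := by
    rintro _ ⟨u, rfl⟩
    change β * σ (β * σ u - u) + 1 * (β * σ u - u) = 0
    rw [map_sub, map_mul, hσ.apply_apply]
    linear_combination u * hβ
  have hkerle : Nat.card f.ker ≤ q := by
    rw [← SetLike.coe_sort_coe, Nat.card_coe_set_eq, hker]
    convert hσ.ncard_setOf_mul_apply_add_mul_eq_zero_le β (neg_ne_zero.mpr one_ne_zero) using 2
    ext u
    simp [← sub_eq_add_neg, sub_eq_zero]
  obtain ⟨hcard, -⟩ := f.card_ker_eq_and_range_eq hrange hkerle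
    (hσ.ncard_setOf_mul_apply_add_mul_eq_zero_le β one_ne_zero)
    (by rw [Nat.card_eq_fintype_card, hσ.card_eq, sq])
  rw [← hker, ← Nat.card_coe_set_eq, SetLike.coe_sort_coe, hcard]

lemma ncard_fixedPoints (hσ : IsConjugation q σ) : {x | σ x = x}.ncard = q := by
  simpa using hσ.ncard_setOf_mul_apply_eq (β := 1) (by simp)

lemma ncard_setOf_apply_mul_self_eq (hσ : IsConjugation q σ) {s : F} (hs0 : s ≠ 0)
    (hs : σ s = s) : {x | σ x * x = s}.ncard = q + 1 := by
  classical
  set ν : Fˣ →* Fˣ := powMonoidHom (q + 1)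
  have hν (u : Fˣ) : (ν u : F) = σ u * u := by simp [ν, hσ.apply_eq_pow, pow_succ]
  set S : Set Fˣ := {u | σ u = u}
  have hrange : Set.range ν ⊆ S := by
    rintro _ ⟨u, rfl⟩
    simp only [S, Set.mem_ofPred_eq, hν, map_mul, hσ.apply_apply, mul_comm]
  have hkerle : Nat.card ν.ker ≤ q + 1 := by
    rw [← SetLike.coe_sort_coe, Nat.card_coe_set_eq]
    calc (ν.ker : Set Fˣ).ncard
        ≤ ((Polynomial.nthRoots (q + 1) (1 : F)).toFinset : Set F).ncard :=
          Set.ncard_le_ncard_of_injOn Units.val (fun u hu => by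
            simpa [ν, Polynomial.mem_nthRoots, Units.ext_iff] using MonoidHom.mem_ker.mp hu)
            Units.val_injective.injOn
      _ ≤ q + 1 := by
        rw [Set.ncard_coe_finset]
        exact (Multiset.toFinset_card_le _).trans (Polynomial.card_nthRoots _ _)
  have hSle : S.ncard ≤ q - 1 := by
    calc S.ncard ≤ ({x : F | σ x = x} \ {0}).ncard :=
          Set.ncard_le_ncard_of_injOn Units.val (fun u hu => ⟨hu, u.ne_zero⟩)
            Units.val_injective.injOn
      _ = q - 1 := by
        rw [Set.ncard_sdiff_singleton_of_mem (s := {x : F | σ x = x}) (map_zero σ),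
          hσ.ncard_fixedPoints]
  obtain ⟨hker, hrange⟩ := ν.card_ker_eq_and_range_eq hrange hkerle hSle <| by
    rw [Nat.card_eq_fintype_card, Fintype.card_units, hσ.card_eq, ← Nat.sq_sub_sq, one_pow]
  obtain ⟨x₀, hx₀⟩ : Units.mk0 s hs0 ∈ Set.range ν := hrange ▸ hs
  have hset : {x | σ x * x = s} = Units.val '' {u | ν u = Units.mk0 s hs0} := by
    ext x
    simp only [Set.mem_ofPred_eq, Set.mem_image, Units.ext_iff, hν, Units.val_mk0]
    refine ⟨fun hx => ⟨Units.mk0 x fun h0 => hs0 ?_, hx, rfl⟩, fun ⟨u, hu, hux⟩ => hux ▸ hu⟩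
    simpa [h0] using hx.symm
  rw [hset, Set.ncard_image_of_injective _ Units.val_injective, ν.ncard_setOf_apply_eq hx₀, hker]

lemma isSquare_of_apply_eq (hσ : IsConjugation q σ) (hodd : Odd q) {z : F} (hz : σ z = z) :
    IsSquare z := by
  rcases eq_or_ne z 0 with rfl | hz0
  · exact IsSquare.zero
  obtain ⟨x, hx⟩ : {x | σ x * x = z}.Nonempty :=
    Set.nonempty_of_ncard_ne_zero (by rw [hσ.ncard_setOf_apply_mul_self_eq hz0 hz]; omega)
  obtain ⟨k, hk⟩ := hodd
  refine ⟨x ^ (k + 1), ?_⟩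
  rw [← hx.out, hσ.apply_eq_pow, ← pow_succ, ← pow_add, hk]
  ring_nf

lemma ncard_setOf_mul_eq_inter_prod (hσ : IsConjugation q σ) {β γ k : F} (hβ : β * σ β = 1)
    (hγ : γ * σ γ = 1) (hk : β * γ * σ k = k) :
    ({p : F × F | p.1 * p.2 = k} ∩ {u | β * σ u = u} ×ˢ {w | γ * σ w = w}).ncard ∈
      ({q - 1, 2 * q - 1} : Set ℕ) := by
  set U : Set F := {u | β * σ u = u}
  set W : Set F := {w | γ * σ w = w}
  have hU : U.ncard = q := hσ.ncard_setOf_mul_apply_eq hβ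
  have hW : W.ncard = q := hσ.ncard_setOf_mul_apply_eq hγ
  have h0U : (0 : F) ∈ U := by simp [U]
  have h0W : (0 : F) ∈ W := by simp [W]
  have hq := hσ.two_le
  rcases eq_or_ne k 0 with rfl | hk0
  · have hsplit : {p : F × F | p.1 * p.2 = 0} ∩ U ×ˢ W = {0} ×ˢ W ∪ (U \ {0}) ×ˢ {0} := by
      ext ⟨u, w⟩
      simp only [Set.mem_inter_iff, Set.mem_ofPred_eq, Set.mem_prod, Set.mem_union,
        Set.mem_singleton_iff, Set.mem_sdiff, mul_eq_zero]
      constructor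
      · rintro ⟨hu | hw, hU, hW⟩
        · exact .inl ⟨hu, hW⟩
        · by_cases hu : u = 0
          exacts [.inl ⟨hu, hW⟩, .inr ⟨⟨hU, hu⟩, hw⟩]
      · rintro (⟨rfl, hW⟩ | ⟨⟨hU, -⟩, rfl⟩)
        exacts [⟨.inl rfl, h0U, hW⟩, ⟨.inr rfl, hU, h0W⟩]
    have hdisj : Disjoint ({0} ×ˢ W) ((U \ {0}) ×ˢ {0}) :=
      Set.disjoint_prod.mpr (.inl Set.disjoint_sdiff_right)
    rw [hsplit, Set.ncard_union_eq hdisj, Set.ncard_prod, Set.ncard_prod,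
      Set.ncard_sdiff_singleton_of_mem h0U, hU, hW]
    simp only [Set.ncard_singleton, Set.mem_insert_iff, Set.mem_singleton_iff]
    omega
  · -- `k / u ∈ W` for every `u ∈ U \ {0}`, because `σ u = u / β` on `U`
    have hgraph :
        {p : F × F | p.1 * p.2 = k} ∩ U ×ˢ W = (fun u => (u, k / u)) '' (U \ {0}) := by
      ext ⟨u, w⟩
      simp only [Set.mem_inter_iff, Set.mem_ofPred_eq, Set.mem_prod, Set.mem_image,
        Set.mem_sdiff, Set.mem_singleton_iff, Prod.mk.injEq]
      constructor
      · rintro ⟨huw, hU, -⟩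
        have hu : u ≠ 0 := by rintro rfl; simp_all
        exact ⟨u, ⟨hU, hu⟩, rfl, by rw [← huw, mul_div_cancel_left₀ _ hu]⟩
      · rintro ⟨u, ⟨hU, hu⟩, rfl, rfl⟩
        refine ⟨mul_div_cancel₀ _ hu, hU, ?_⟩
        change γ * σ (k / u) = k / u
        rw [map_div₀, mul_div_assoc', div_eq_div_iff ((map_ne_zero σ).mpr hu) hu]
        have hσu : β * σ u = u := hU
        linear_combination (-(γ * σ k)) * hσu + σ u * hk
    rw [hgraph, Set.ncard_image_of_injective _ fun u v h => (Prod.mk.inj h).1,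
      Set.ncard_sdiff_singleton_of_mem h0U, hU]
    exact .inl rfl

lemma range_eq_prod_of_injective (hσ : IsConjugation q σ) {Φ : F → F × F}
    (hΦ : Function.Injective Φ) {A B : Set F} (hA : A.ncard = q) (hB : B.ncard = q)
    (hrange : Set.range Φ ⊆ A ×ˢ B) : Set.range Φ = A ×ˢ B := by
  refine Set.eq_of_subset_of_ncard_le hrange ?_
  rw [Set.ncard_range_of_injective hΦ, Set.ncard_prod, hA, hB, Nat.card_eq_fintype_card,
    hσ.card_eq, sq]

lemma surjective_mul_sub_apply (hσ : IsConjugation q σ) {a : F} (ha : 4 * a * σ a ≠ 1) :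
    Function.Surjective fun t => 2 * a * t - σ t := by
  refine Finite.injective_iff_surjective.mp fun t₁ t₂ h => ?_
  have hz : σ (t₁ - t₂) = 2 * a * (t₁ - t₂) := by
    rw [map_sub]
    linear_combination -h
  have : t₁ - t₂ = 4 * a * σ a * (t₁ - t₂) :=
    calc t₁ - t₂ = σ (σ (t₁ - t₂)) := (hσ.apply_apply _).symm
      _ = 4 * a * σ a * (t₁ - t₂) := by rw [hz, map_mul, map_mul, map_ofNat, hz]; ring
  refine sub_eq_zero.mp ((mul_eq_zero.mp (?_ : (4 * a * σ a - 1) * (t₁ - t₂) = 0)).resolve_left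
    (sub_ne_zero.mpr ha))
  linear_combination -this

end IsConjugation

/-- For `e = c + σ c` these are the abscissae of the points of `H` on the parabola
`y = a x² + b x + c`. -/
def conicSet {F : Type*} [Field F] (σ : F →+* F) (a b e : F) : Set F :=
  {x | σ x * x = a * x ^ 2 + σ (a * x ^ 2) + (b * x + σ (b * x)) + e}

lemma mem_conicSet_zero_iff {F : Type*} [Field F] {σ : F →+* F} (h2 : (2 : F) ≠ 0) {a δ : F}
    (ha : a ≠ 0) (hδ : δ * δ = 1 - 4 * a * σ a) (e x : F) :
    x ∈ conicSet σ a 0 e ↔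
      (2 * a * x + (δ - 1) * σ x) * ((δ - 1) * x + 2 * σ a * σ x) = 2 * (1 - δ) * e := by
  simp only [conicSet, Set.mem_ofPred_eq, zero_mul, map_zero, add_zero, map_mul, map_pow]
  constructor
  · intro h
    linear_combination 2 * (1 - δ) * h + σ x * x * hδ
  · intro h
    have hD := one_add_mul_one_sub_ne_zero h2 ha ((map_ne_zero σ).mpr ha) hδ
    refine mul_left_cancel₀ (mul_ne_zero h2 (right_ne_zero_of_mul hD)) ?_
    linear_combination h - σ x * x * hδ

namespace IsConjugation

variable {F : Type*} [Field F] [Fintype F] {q : ℕ} {σ : F →+* F}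

lemma ncard_conicSet_add (hσ : IsConjugation q σ) (a b e t : F) :
    (conicSet σ a (b + (2 * a * t - σ t))
      (e + (a * t ^ 2 + b * t) + σ (a * t ^ 2 + b * t) - σ t * t)).ncard =
      (conicSet σ a b e).ncard := by
  have : conicSet σ a (b + (2 * a * t - σ t))
      (e + (a * t ^ 2 + b * t) + σ (a * t ^ 2 + b * t) - σ t * t) =
      (· + t) ⁻¹' conicSet σ a b e := by
    ext x
    simp only [conicSet, Set.mem_preimage, Set.mem_ofPred_eq, map_add, map_mul, map_pow, map_sub,
      map_ofNat, hσ.apply_apply]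
    constructor <;> intro h <;> linear_combination h
  rw [this, Set.ncard_preimage_of_injective_subset_range (add_left_injective t)
    fun y _ => ⟨y - t, sub_add_cancel y t⟩]

lemma card_ker_and_range_of_degenerate (hσ : IsConjugation q σ) {a : F}
    (ha : 4 * a * σ a = 1) :
    Nat.card (AddMonoidHom.mulLeft (2 * a) - σ.toAddMonoidHom).ker = q ∧
      Set.range (AddMonoidHom.mulLeft (2 * a) - σ.toAddMonoidHom) =
        {u | -(2 * a) * σ u = u} := by
  set f := AddMonoidHom.mulLeft (2 * a) - σ.toAddMonoidHom
  have hf (x : F) : f x = 2 * a * x - σ x := rfl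
  refine f.card_ker_eq_and_range_eq ?_ ?_ (hσ.ncard_setOf_mul_apply_eq ?_).le
    (by rw [Nat.card_eq_fintype_card, hσ.card_eq, sq])
  · rintro _ ⟨x, rfl⟩
    simp only [Set.mem_ofPred_eq, hf, map_sub, map_mul, map_ofNat, hσ.apply_apply]
    linear_combination (-σ x) * ha
  · rw [← SetLike.coe_sort_coe, Nat.card_coe_set_eq]
    convert hσ.ncard_setOf_mul_apply_add_mul_eq_zero_le (-1)
      (two_mul_ne_zero_of_four_mul_mul_eq_one ha) using 2
    ext x
    simp only [SetLike.mem_coe, AddMonoidHom.mem_ker, hf, Set.mem_ofPred_eq]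
    constructor <;> intro h <;> linear_combination h
  · simp only [map_neg, map_mul, map_ofNat]
    linear_combination ha

lemma mem_conicSet_iff_of_degenerate (hσ : IsConjugation q σ) {a : F} (ha : 4 * a * σ a = 1)
    (b e x : F) : x ∈ conicSet σ a b e ↔
      σ (2 * a * x - σ x) * (2 * a * x - σ x) = 2 * (b * x + σ (b * x) + e) := by
  have h2 : (2 : F) ≠ 0 := left_ne_zero_of_mul (two_mul_ne_zero_of_four_mul_mul_eq_one ha)
  simp only [conicSet, Set.mem_ofPred_eq, map_sub, map_mul, map_pow, map_ofNat, hσ.apply_apply]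
  constructor
  · intro h
    linear_combination 2 * h + (σ x * x) * ha
  · intro h
    refine mul_left_cancel₀ h2 ?_
    linear_combination h - (σ x * x) * ha

open Polynomial in
lemma ncard_conicSet_of_degenerate_of_eq (hσ : IsConjugation q σ) {a b : F}
    (ha : 4 * a * σ a = 1) (hb : b + 2 * a * σ b = 0) (e : F) :
    (conicSet σ a b e).ncard ∈ ({0, q, 2 * q} : Set ℕ) := by
  set f := AddMonoidHom.mulLeft (2 * a) - σ.toAddMonoidHom
  obtain ⟨hker, hrange⟩ := hσ.card_ker_and_range_of_degenerate ha
  set Z : Set F := {u | σ u * u + 2 * σ b * u = 2 * e}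
  have hpre : conicSet σ a b e = f ⁻¹' Z := by
    ext x
    rw [hσ.mem_conicSet_iff_of_degenerate ha, Set.mem_preimage]
    change _ ↔ σ (2 * a * x - σ x) * (2 * a * x - σ x) + 2 * σ b * (2 * a * x - σ x) = 2 * e
    rw [map_mul]
    constructor
    · intro h; linear_combination h + 2 * x * hb
    · intro h; linear_combination h - 2 * x * hb
  -- on the range of `f`, `σ u = -u / (2 * a)` turns the equation of `Z` into a quadratic one
  have hZ : (Z ∩ Set.range f).ncard ≤ 2 := by
    have hP : (X ^ 2 - C (4 * a * σ b) * X + C (4 * a * e)).Monic := by monicity!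
    refine le_trans (Set.ncard_le_ncard ?_) ((ncard_setOf_eval_eq_zero_le_s4 hP.ne_zero).trans
      (by compute_degree!))
    rintro u ⟨hZu, hu⟩
    rw [hrange] at hu
    simp only [Z, Set.mem_ofPred_eq, eval_add, eval_sub, eval_pow, eval_mul, eval_C,
      eval_X] at hZu hu ⊢
    linear_combination (-(2 * a)) * hZu - u * hu
  rw [hpre, f.ncard_preimage, hker]
  interval_cases (Z ∩ Set.range f).ncard <;> simp

lemma ncard_graph_inter_prod (hσ : IsConjugation q σ) (h2 : (2 : F) ≠ 0) {e : F}
    (he : σ e = e) (U : Set F) :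
    ({p : F × F | σ p.1 * p.1 = 2 * (p.2 + e)} ∩ U ×ˢ {l | σ l = l}).ncard = U.ncard := by
  have hgraph : {p : F × F | σ p.1 * p.1 = 2 * (p.2 + e)} ∩ U ×ˢ {l | σ l = l} =
      (fun u => (u, σ u * u / 2 - e)) '' U := by
    ext ⟨u, l⟩
    simp only [Set.mem_inter_iff, Set.mem_prod, Set.mem_ofPred_eq, Set.mem_image, Prod.mk.injEq]
    constructor
    · rintro ⟨hT, hU, -⟩
      refine ⟨u, hU, rfl, ?_⟩
      rw [sub_eq_iff_eq_add, div_eq_iff h2]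
      linear_combination hT
    · rintro ⟨u, hU, rfl, rfl⟩
      refine ⟨by rw [sub_add_cancel, mul_div_cancel₀ _ h2], hU, ?_⟩
      simp only [map_sub, map_div₀, map_mul, map_ofNat, hσ.apply_apply, he, mul_comm]
  rw [hgraph, Set.ncard_image_of_injective _ fun u v h => (Prod.mk.inj h).1]

lemma ncard_conicSet_of_degenerate_of_ne (hσ : IsConjugation q σ) {a b e : F}
    (ha : 4 * a * σ a = 1) (hb : b + 2 * a * σ b ≠ 0) (he : σ e = e) :
    (conicSet σ a b e).ncard = q := by
  have h2 : (2 : F) ≠ 0 := left_ne_zero_of_mul (two_mul_ne_zero_of_four_mul_mul_eq_one ha)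
  set f := AddMonoidHom.mulLeft (2 * a) - σ.toAddMonoidHom
  obtain ⟨-, hrange⟩ := hσ.card_ker_and_range_of_degenerate ha
  have hU : {u | -(2 * a) * σ u = u}.ncard = q :=
    hσ.ncard_setOf_mul_apply_eq (by simp only [map_neg, map_mul, map_ofNat]; linear_combination ha)
  set g := AddMonoidHom.mulLeft b + σ.toAddMonoidHom.comp (AddMonoidHom.mulLeft b)
  have hinj : Function.Injective (f.prod g) := by
    refine (injective_iff_map_eq_zero _).mpr fun x hx => ?_
    obtain ⟨hfx, hgx⟩ := Prod.ext_iff.mp hx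
    change 2 * a * x - σ x = 0 at hfx
    change b * x + σ (b * x) = 0 at hgx
    rw [map_mul] at hgx
    refine (mul_eq_zero.mp (?_ : (b + 2 * a * σ b) * x = 0)).resolve_left hb
    linear_combination hgx + σ b * hfx
  have hprod : Set.range (f.prod g) = {u | -(2 * a) * σ u = u} ×ˢ {l | σ l = l} := by
    refine hσ.range_eq_prod_of_injective hinj hU hσ.ncard_fixedPoints ?_
    rintro _ ⟨x, rfl⟩
    refine ⟨hrange ▸ Set.mem_range_self x, ?_⟩
    change σ (b * x + σ (b * x)) = b * x + σ (b * x)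
    rw [map_add, hσ.apply_apply, add_comm]
  have hpre : conicSet σ a b e = (f.prod g) ⁻¹' {p | σ p.1 * p.1 = 2 * (p.2 + e)} := by
    ext x
    rw [hσ.mem_conicSet_iff_of_degenerate ha]
    rfl
  rw [hpre, ← Set.preimage_inter_range, Set.ncard_preimage_of_injective_subset_range hinj
    Set.inter_subset_right, hprod, hσ.ncard_graph_inter_prod h2 he, hU]

lemma ncard_conicSet_zero_of_apply_eq (hσ : IsConjugation q σ) (h2 : (2 : F) ≠ 0) {a δ e : F}
    (ha : a ≠ 0) (hδ : δ * δ = 1 - 4 * a * σ a) (hδ0 : δ ≠ 0) (hδσ : σ δ = δ) (he : σ e = e) :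
    (conicSet σ a 0 e).ncard ∈ ({1, q + 1} : Set ℕ) := by
  have hD := one_add_mul_one_sub_ne_zero h2 ha ((map_ne_zero σ).mpr ha) hδ
  set φ : F →+ F :=
    AddMonoidHom.mulLeft (2 * a) + (AddMonoidHom.mulLeft (δ - 1)).comp σ.toAddMonoidHom
  have hφ (x : F) : φ x = 2 * a * x + (δ - 1) * σ x := rfl
  have hσφ (x : F) : σ (φ x) = (δ - 1) * x + 2 * σ a * σ x := by
    simp only [hφ, map_add, map_mul, map_sub, map_one, map_ofNat, hδσ, hσ.apply_apply]
    ring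
  have hinj : Function.Injective φ := by
    refine (injective_iff_map_eq_zero φ).mpr fun z hz => ?_
    have hσz : (δ - 1) * z + 2 * σ a * σ z = 0 := by rw [← hσφ, hz, map_zero]
    exact eq_zero_of_linear_factors_eq_zero h2 ha ((map_ne_zero σ).mpr ha) hδ hδ0 hz hσz
  set s := 2 * (1 - δ) * e
  have hpre : conicSet σ a 0 e = φ ⁻¹' {u | σ u * u = s} := by
    ext x
    rw [mem_conicSet_zero_iff h2 ha hδ, Set.mem_preimage, Set.mem_ofPred_eq, hσφ, hφ, mul_comm]
  rw [hpre, Set.ncard_preimage_of_injective_subset_range hinj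
    fun u _ => Finite.surjective_of_injective hinj u]
  rcases eq_or_ne e 0 with rfl | he0
  · left
    have : {u | σ u * u = s} = {0} := by ext; simp [s]
    rw [this, Set.ncard_singleton]
  · right
    refine hσ.ncard_setOf_apply_mul_self_eq
      (mul_ne_zero (mul_ne_zero h2 (right_ne_zero_of_mul hD)) he0) ?_
    simp only [s, map_mul, map_sub, map_one, map_ofNat, he, hδσ]

lemma ncard_conicSet_zero_of_apply_eq_neg (hσ : IsConjugation q σ) (h2 : (2 : F) ≠ 0)
    {a δ e : F} (ha : a ≠ 0) (hδ : δ * δ = 1 - 4 * a * σ a) (hδ0 : δ ≠ 0) (hδσ : σ δ = -δ)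
    (he : σ e = e) : (conicSet σ a 0 e).ncard ∈ ({q - 1, 2 * q - 1} : Set ℕ) := by
  have hD := one_add_mul_one_sub_ne_zero h2 ha ((map_ne_zero σ).mpr ha) hδ
  have h1δ : 1 + δ ≠ 0 := left_ne_zero_of_mul hD
  have h2a : 2 * a ≠ 0 := mul_ne_zero h2 ha
  set φ : F →+ F :=
    AddMonoidHom.mulLeft (2 * a) + (AddMonoidHom.mulLeft (δ - 1)).comp σ.toAddMonoidHom
  set ψ : F →+ F :=
    AddMonoidHom.mulLeft (δ - 1) + (AddMonoidHom.mulLeft (2 * σ a)).comp σ.toAddMonoidHom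
  have hφ (x : F) : φ x = 2 * a * x + (δ - 1) * σ x := rfl
  have hψ (x : F) : ψ x = (δ - 1) * x + 2 * σ a * σ x := rfl
  have hinj : Function.Injective (φ.prod ψ) := by
    refine (injective_iff_map_eq_zero _).mpr fun z hz => ?_
    obtain ⟨hφz, hψz⟩ := Prod.ext_iff.mp hz
    exact eq_zero_of_linear_factors_eq_zero h2 ha ((map_ne_zero σ).mpr ha) hδ hδ0 hφz hψz
  -- since `σ δ = -δ`, the two factors are no longer conjugate: each ranges over a `σ`-twisted line
  set β := -(2 * a) / (1 + δ)
  set γ := (δ - 1) / (2 * a)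
  have hβ : β * σ β = 1 := by
    simp only [β, map_div₀, map_neg, map_mul, map_add, map_one, map_ofNat, hδσ]
    rw [div_mul_div_comm, div_eq_one_iff_eq (by simpa [← sub_eq_add_neg] using hD)]
    linear_combination hδ
  have hγ : γ * σ γ = 1 := by
    simp only [γ, map_div₀, map_sub, map_mul, map_one, map_ofNat, hδσ]
    rw [div_mul_div_comm, div_eq_one_iff_eq (mul_ne_zero h2a (by simpa using h2a))]
    linear_combination -hδ
  have hrange : Set.range (φ.prod ψ) = {u | β * σ u = u} ×ˢ {w | γ * σ w = w} := by
    refine hσ.range_eq_prod_of_injective hinj (hσ.ncard_setOf_mul_apply_eq hβ)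
      (hσ.ncard_setOf_mul_apply_eq hγ) ?_
    rintro _ ⟨x, rfl⟩
    simp only [Set.mem_prod, Set.mem_ofPred_eq, AddMonoidHom.prod_apply, hφ, hψ, map_add,
      map_mul, map_sub, map_one, map_ofNat, hδσ, hσ.apply_apply, β, γ]
    constructor
    · field_simp
      linear_combination (-σ x) * hδ
    · field_simp
      linear_combination (-σ x) * hδ
  have hpre : conicSet σ a 0 e = (φ.prod ψ) ⁻¹' {p | p.1 * p.2 = 2 * (1 - δ) * e} := by
    ext x
    rw [mem_conicSet_zero_iff h2 ha hδ]
    rfl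
  rw [hpre, ← Set.preimage_inter_range, Set.ncard_preimage_of_injective_subset_range hinj
    Set.inter_subset_right, hrange]
  refine hσ.ncard_setOf_mul_eq_inter_prod hβ hγ ?_
  simp only [β, γ, map_mul, map_sub, map_one, map_ofNat, hδσ, he]
  field_simp
  ring

lemma ncard_conicSet_mem (hσ : IsConjugation q σ) (hodd : Odd q) {a : F} (ha : a ≠ 0) (b : F)
    {e : F} (he : σ e = e) :
    (conicSet σ a b e).ncard ∈ ({0, 1, q - 1, q, q + 1, 2 * q - 1, 2 * q} : Set ℕ) := by
  have h2 := hσ.two_ne_zero_of_odd hodd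
  simp only [Set.mem_insert_iff, Set.mem_singleton_iff]
  by_cases hD : 4 * a * σ a = 1
  · by_cases hb : b + 2 * a * σ b = 0
    · have := hσ.ncard_conicSet_of_degenerate_of_eq hD hb e
      simp only [Set.mem_insert_iff, Set.mem_singleton_iff] at this
      omega
    · have := hσ.ncard_conicSet_of_degenerate_of_ne hD hb he
      omega
  -- translate `x` so as to kill the linear term
  obtain ⟨t, ht⟩ := hσ.surjective_mul_sub_apply hD (-b)
  simp only at ht
  rw [← hσ.ncard_conicSet_add a b e t, ht, add_neg_cancel]
  set e' := e + (a * t ^ 2 + b * t) + σ (a * t ^ 2 + b * t) - σ t * t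
  have he' : σ e' = e' := by
    simp only [e', map_add, map_sub, map_mul, he, hσ.apply_apply]
    ring
  obtain ⟨δ, hδ⟩ := hσ.isSquare_of_apply_eq hodd (z := 1 - 4 * a * σ a)
    (by simp only [map_sub, map_one, map_mul, map_ofNat, hσ.apply_apply]; ring)
  have hδ0 : δ ≠ 0 := by
    rintro rfl
    exact hD (by linear_combination -hδ)
  have hσδ : σ δ * σ δ = δ * δ := by
    rw [← map_mul, ← hδ, map_sub, map_one, map_mul, map_mul, map_ofNat, hσ.apply_apply]
    ring
  rcases mul_self_eq_mul_self_iff.mp hσδ with hδσ | hδσ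
  · have := hσ.ncard_conicSet_zero_of_apply_eq h2 ha hδ.symm hδ0 hδσ he'
    simp only [Set.mem_insert_iff, Set.mem_singleton_iff] at this
    omega
  · have := hσ.ncard_conicSet_zero_of_apply_eq_neg h2 ha hδ.symm hδ0 hδσ he'
    simp only [Set.mem_insert_iff, Set.mem_singleton_iff] at this
    omega

end IsConjugation

theorem stmt_4 (q : ℕ) (hq : IsPrimePow q) (hodd : Odd q) (F : Type*) [Field F] [Fintype F]
    (hF : Fintype.card F = q ^ 2) (a b c : F) (ha : a ≠ 0) :
    Set.ncard {p : F × F | p.1 ^ (q + 1) = p.2 ^ q + p.2 ∧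
        p.2 = a * p.1 ^ 2 + b * p.1 + c}
      ∈ ({0, 1, q - 1, q, q + 1, 2 * q - 1, 2 * q} : Set ℕ) := by
  obtain ⟨p, n, hp, -, rfl⟩ := hq
  have := Fact.mk (Nat.prime_iff.mpr hp)
  have : CharP F p := charP_of_card_eq_prime_pow (f := n * 2) (by rw [hF, pow_mul])
  set σ := iterateFrobenius F p n
  have hσ : IsConjugation (p ^ n) σ := ⟨hF, iterateFrobenius_def p n⟩
  have hset : {pt : F × F | pt.1 ^ (p ^ n + 1) = pt.2 ^ p ^ n + pt.2 ∧
      pt.2 = a * pt.1 ^ 2 + b * pt.1 + c} =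
      (fun x => (x, a * x ^ 2 + b * x + c)) '' conicSet σ a b (c + σ c) := by
    ext ⟨x, y⟩
    simp only [conicSet, Set.mem_ofPred_eq, Set.mem_image, Prod.mk.injEq, pow_succ,
      ← hσ.apply_eq_pow]
    constructor
    · rintro ⟨h, rfl⟩
      refine ⟨x, ?_, rfl, rfl⟩
      rw [h, map_add, map_add]
      ring
    · rintro ⟨x, hx, rfl, rfl⟩
      refine ⟨?_, rfl⟩
      rw [hx, map_add, map_add]
      ring
  rw [hset, Set.ncard_image_of_injective _ fun x y h => (Prod.mk.inj h).1]
  exact hσ.ncard_conicSet_mem hodd ha b (by rw [map_add, hσ.apply_apply, add_comm])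
end

section
/- Let q be an even power of 2 (i.e. q = 2^e, e ≥ 1) and let F be the finite field with q² elements. For every a, b, c ∈ F with a ≠ 0, the cardinality of the set {(x,y) ∈ F×F : x^(q+1) = y^q + y and y = a·x² + b·x + c} belongs to the set {1, q−1, q+1, 2q−1}. -/
/-!
Write `N z = z ^ (q + 1)` and `Tr y = y + y ^ q` for the norm and trace of `𝔽_{q²}/𝔽_q`. In
characteristic 2 the intersection points are the `x` with `N x + Tr (a x² + b x + c) = 0`, and the
substitution `x = z + b ^ q` turns this into `Q z = d`, where `Q z = N z + Tr (a z²)`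
(`normTraceForm`) and `d ∈ 𝔽_q`. Now `Q z = z² h (z ^ (q - 1))` with `h t = a ^ q t² + t + a`
(`circleQuadratic`), and `z ↦ z ^ (q - 1)` maps `𝔽ˣ` onto the circle `{t | t ^ (q + 1) = 1}`
with fibres of size `q - 1`. The roots of `h` on the circle come in pairs `r, a / (a ^ q r)`, so
there are `0` or `2` of them. For `d = 0` the solutions are `z = 0` and the fibres over these
roots: `1` or `2q - 1` of them. For `d ≠ 0`, `z ↦ z ^ (q - 1)` is a bijection from the solutions
onto the circle minus these roots (squaring is bijective), giving `q + 1` or `q - 1`.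
-/

theorem Set.ncard_preimage_eq_mul_of_ncard_fiber {α β : Type*} [Finite α] {f : α → β}
    {T : Set β} (hT : T.Finite) {n : ℕ} (hfib : ∀ t ∈ T, {x | f x = t}.ncard = n) :
    (f ⁻¹' T).ncard = T.ncard * n := by
  classical
  have := Fintype.ofFinite α
  rw [Set.ncard_eq_toFinset_card _ hT, Set.ncard_eq_toFinset_card',
    Finset.card_eq_sum_card_fiberwise (f := f) (t := hT.toFinset) (by simp [Set.MapsTo]),
    Finset.sum_congr rfl (g := fun _ => n), Finset.sum_const, smul_eq_mul]
  intro t ht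
  rw [Set.Finite.mem_toFinset] at ht
  rw [← hfib t ht, Set.ncard_eq_toFinset_card']
  congr 1
  ext x
  simp only [Finset.mem_filter, Set.mem_toFinset, Set.mem_preimage]
  exact ⟨And.right, fun h => ⟨h ▸ ht, h⟩⟩

theorem IsPrimitiveRoot.ncard_setOf_pow_eq {R : Type*} [CommRing R] [IsDomain R] {ζ : R} {n : ℕ}
    (hζ : IsPrimitiveRoot ζ n) (hn : 0 < n) {α : R} (hα : α ≠ 0) :
    {z : R | z ^ n = α ^ n}.ncard = n := by
  classical
  have hset : {z : R | z ^ n = α ^ n} = ↑(Polynomial.nthRootsFinset n (α ^ n)) := by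
    ext z
    simp [Polynomial.mem_nthRootsFinset hn]
  rw [hset, Set.ncard_coe_finset, Polynomial.nthRootsFinset_def,
    Multiset.toFinset_card_of_nodup (hζ.nthRoots_nodup (pow_ne_zero n hα)),
    hζ.card_nthRoots, if_pos ⟨α, rfl⟩]

theorem FiniteField.exists_isPrimitiveRoot (F : Type*) [Field F] [Fintype F] :
    ∃ ζ : F, IsPrimitiveRoot ζ (Fintype.card F - 1) := by
  classical
  obtain ⟨g, hg⟩ := IsCyclic.exists_ofOrder_eq_natCard (α := Fˣ)
  refine ⟨g, ?_⟩
  rw [IsPrimitiveRoot.coe_units_iff, ← Fintype.card_units, ← Nat.card_eq_fintype_card, ← hg]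
  exact IsPrimitiveRoot.orderOf g

namespace FiniteField

variable {F : Type*} [Field F] [Fintype F] {q : ℕ}

theorem one_lt_of_card_eq_sq (hF : Fintype.card F = q ^ 2) : 1 < q := by
  by_contra! hq
  have := Fintype.one_lt_card (α := F)
  rw [hF] at this
  exact this.not_ge (pow_le_one' hq 2)

theorem pow_pow_of_card_eq_sq (hF : Fintype.card F = q ^ 2) (x : F) : (x ^ q) ^ q = x := by
  rw [← pow_mul, ← sq, ← hF, pow_card]

theorem card_sub_one_of_card_eq_sq (hF : Fintype.card F = q ^ 2) :
    Fintype.card F - 1 = (q - 1) * (q + 1) := by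
  obtain ⟨k, rfl⟩ : ∃ k, q = k + 1 := ⟨q - 1, by have := one_lt_of_card_eq_sq hF; omega⟩
  rw [hF, Nat.add_sub_cancel]
  ring_nf
  omega

theorem pow_sub_one_pow_add_one (hF : Fintype.card F = q ^ 2) {z : F} (hz : z ≠ 0) :
    (z ^ (q - 1)) ^ (q + 1) = 1 := by
  rw [← pow_mul, ← card_sub_one_of_card_eq_sq hF, pow_card_sub_one_eq_one z hz]

theorem ncard_setOf_pow_add_one_eq_one (hF : Fintype.card F = q ^ 2) :
    {t : F | t ^ (q + 1) = 1}.ncard = q + 1 := by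
  obtain ⟨ζ, hζ⟩ := exists_isPrimitiveRoot F
  rw [card_sub_one_of_card_eq_sq hF] at hζ
  have hμ := hζ.pow (Nat.mul_pos (by have := one_lt_of_card_eq_sq hF; omega) q.succ_pos) rfl
  simpa using hμ.ncard_setOf_pow_eq q.succ_pos one_ne_zero

theorem ncard_setOf_pow_sub_one_eq (hF : Fintype.card F = q ^ 2) {t : F}
    (ht : t ^ (q + 1) = 1) : {z : F | z ^ (q - 1) = t}.ncard = q - 1 := by
  have hq : 0 < q - 1 := by have := one_lt_of_card_eq_sq hF; omega
  obtain ⟨ζ, hζ⟩ := exists_isPrimitiveRoot F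
  rw [card_sub_one_of_card_eq_sq hF] at hζ
  have hpos := Nat.mul_pos hq q.succ_pos
  obtain ⟨i, -, rfl⟩ := (hζ.pow hpos rfl).eq_pow_of_pow_eq_one ht
  rw [← pow_mul, mul_comm, pow_mul]
  exact (hζ.pow hpos (mul_comm _ _)).ncard_setOf_pow_eq hq (pow_ne_zero i (hζ.ne_zero hpos.ne'))

end FiniteField

section NormTraceForm

variable {F : Type*} [Field F]

def normTraceForm (q : ℕ) (a z : F) : F := z ^ (q + 1) + (a * z ^ 2) ^ q + a * z ^ 2

def circleQuadratic (q : ℕ) (a t : F) : F := a ^ q * t ^ 2 + t + a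

def circleRoots (q : ℕ) (a : F) : Set F := {t | t ^ (q + 1) = 1 ∧ circleQuadratic q a t = 0}

theorem normTraceForm_eq_mul {q : ℕ} (hq : 1 ≤ q) (a z : F) :
    normTraceForm q a z = z ^ 2 * circleQuadratic q a (z ^ (q - 1)) := by
  obtain ⟨k, rfl⟩ : ∃ k, q = k + 1 := ⟨q - 1, by omega⟩
  simp only [normTraceForm, circleQuadratic, Nat.add_sub_cancel]
  ring

theorem ncard_setOf_normTraceForm_eq_zero [Fintype F] {q : ℕ} (hF : Fintype.card F = q ^ 2)
    (a : F) : {z : F | normTraceForm q a z = 0}.ncard = (circleRoots q a).ncard * (q - 1) + 1 := by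
  have hq := FiniteField.one_lt_of_card_eq_sq hF
  have hset : {z : F | normTraceForm q a z = 0} =
      insert 0 ((· ^ (q - 1)) ⁻¹' circleRoots q a) := by
    ext z
    rcases eq_or_ne z 0 with rfl | hz
    · simpa [normTraceForm] using (zero_lt_one.trans hq).ne'
    simp [normTraceForm_eq_mul hq.le, hz, circleRoots,
      FiniteField.pow_sub_one_pow_add_one hF hz]
  have h0 : (0 : F) ∉ (· ^ (q - 1)) ⁻¹' circleRoots q a := by
    simp [circleRoots, zero_pow (by omega : q - 1 ≠ 0)]
  rw [hset, Set.ncard_insert_of_notMem h0, Set.ncard_preimage_eq_mul_of_ncard_fiber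
    (Set.toFinite _) fun t ht => FiniteField.ncard_setOf_pow_sub_one_eq hF ht.1]

section CharTwo

variable [CharP F 2] {q e : ℕ}

theorem add_pow_of_eq_two_pow (hqe : q = 2 ^ e) (x y : F) : (x + y) ^ q = x ^ q + y ^ q := by
  subst hqe
  exact add_pow_char_pow x y 2 e

variable [Fintype F]

theorem exists_normTraceForm_translate (hqe : q = 2 ^ e) (hF : Fintype.card F = q ^ 2)
    (a b c : F) : ∃ d : F, d ^ q = d ∧ ∀ x : F,
      x ^ (q + 1) + ((a * x ^ 2 + b * x + c) ^ q + (a * x ^ 2 + b * x + c)) =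
        normTraceForm q a (x - b ^ q) + d := by
  have frob := add_pow_of_eq_two_pow (F := F) hqe
  have hbq : (b ^ q) ^ q = b := FiniteField.pow_pow_of_card_eq_sq hF b
  refine ⟨b ^ q * b + (a * (b ^ q) ^ 2 + c) + (a * (b ^ q) ^ 2 + c) ^ q, ?_, fun x => ?_⟩
  · rw [frob, frob, mul_pow, hbq, FiniteField.pow_pow_of_card_eq_sq hF, mul_comm b]
    ring
  · obtain ⟨z, rfl⟩ : ∃ z, x = z + b ^ q := ⟨x - b ^ q, (sub_add_cancel _ _).symm⟩
    have h2 : (2 : F) = 0 := CharTwo.two_eq_zero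
    simp only [add_sub_cancel_right, normTraceForm, frob, mul_pow, pow_succ _ q,
      pow_right_comm _ 2 q, hbq]
    linear_combination
      (b ^ q * z ^ q + b * z + b * b ^ q + a * z * b ^ q + z ^ q * b * a ^ q) * h2

theorem sq_mul_circleQuadratic_pow (hqe : q = 2 ^ e) (hF : Fintype.card F = q ^ 2) (a : F)
    {t : F} (ht : t ^ (q + 1) = 1) :
    t ^ 2 * circleQuadratic q a t ^ q = circleQuadratic q a t := by
  have frob := add_pow_of_eq_two_pow (F := F) hqe
  have htq : t ^ q = t⁻¹ := eq_inv_of_mul_eq_one_left (by rw [← pow_succ, ht])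
  have ht0 : t ≠ 0 := by rintro rfl; simp at ht
  rw [circleQuadratic, frob, frob, mul_pow, FiniteField.pow_pow_of_card_eq_sq hF,
    pow_right_comm, htq]
  field_simp
  ring

theorem ncard_circleRoots (hF : Fintype.card F = q ^ 2) {a : F} (ha : a ≠ 0) :
    (circleRoots q a).ncard = 0 ∨ (circleRoots q a).ncard = 2 := by
  rcases (circleRoots q a).eq_empty_or_nonempty with h | ⟨r, hr_circ, hr⟩
  · simp [h]
  have h2 : (2 : F) = 0 := CharTwo.two_eq_zero
  have hr0 : r ≠ 0 := by rintro rfl; simp [circleQuadratic, ha] at hr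
  have har0 : a ^ q * r ≠ 0 := mul_ne_zero (pow_ne_zero q ha) hr0
  have hnorm : (a ^ q) ^ (q + 1) = a ^ (q + 1) := by
    rw [pow_succ, FiniteField.pow_pow_of_card_eq_sq hF, pow_succ', mul_comm]
  -- the roots of `a ^ q t² + t + a` multiply to `a / a ^ q`, whose norm is `1`; they are distinct
  -- because the derivative of this quadratic is `1` in characteristic 2
  set r' := a / (a ^ q * r)
  have hr'_circ : r' ^ (q + 1) = 1 := by
    rw [div_pow, mul_pow, hnorm, hr_circ, mul_one, div_self (pow_ne_zero _ ha)]
  have hr' : circleQuadratic q a r' = 0 := by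
    simp only [circleQuadratic, r'] at hr ⊢
    field_simp
    linear_combination a * hr
  simp only [circleQuadratic] at hr
  right
  rw [Set.ncard_eq_two]
  refine ⟨r, r', fun h => hr0 ?_, Set.ext fun t => ⟨fun ⟨_, ht⟩ => ?_, ?_⟩⟩
  · rw [eq_div_iff har0] at h
    linear_combination hr - h - a * h2
  · simp only [circleQuadratic] at ht
    have hfac : (t - r) * (a ^ q * (t + r) + 1) = 0 := by linear_combination ht - hr
    rcases mul_eq_zero.1 hfac with h | h
    · exact Or.inl (sub_eq_zero.1 h)
    · refine Or.inr (eq_div_of_mul_eq har0 ?_)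
      linear_combination r * h + hr - (r + a + a ^ q * r ^ 2) * h2
  · rintro (rfl | rfl)
    exacts [⟨hr_circ, hr⟩, ⟨hr'_circ, hr'⟩]

theorem bijOn_pow_sub_one_setOf_normTraceForm_eq (hqe : q = 2 ^ e)
    (hF : Fintype.card F = q ^ 2) (a : F) {d : F} (hd : d ^ q = d) (hd0 : d ≠ 0) :
    Set.BijOn (· ^ (q - 1)) {z : F | normTraceForm q a z = d}
      ({t : F | t ^ (q + 1) = 1} \ circleRoots q a) := by
  have hq := FiniteField.one_lt_of_card_eq_sq hF
  have hQ := normTraceForm_eq_mul (F := F) hq.le a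
  refine ⟨fun z (hz : _ = d) => ?_, fun z₁ (hz₁ : _ = d) z₂ (hz₂ : _ = d) h => ?_,
    fun t ⟨ht, htR⟩ => ?_⟩
  · have hz0 : z ≠ 0 := by
      rintro rfl
      rw [hQ, zero_pow two_ne_zero, zero_mul] at hz
      exact hd0 hz.symm
    refine ⟨FiniteField.pow_sub_one_pow_add_one hF hz0, fun ⟨_, h⟩ => hd0 ?_⟩
    rw [← hz, hQ, h, mul_zero]
  · have hne : circleQuadratic q a (z₁ ^ (q - 1)) ≠ 0 := by
      intro h0
      rw [hQ, h0, mul_zero] at hz₁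
      exact hd0 hz₁.symm
    dsimp only at h
    rw [hQ] at hz₁
    rw [hQ, ← h] at hz₂
    exact CharTwo.sq_inj.1 (mul_right_cancel₀ hne (hz₁.trans hz₂.symm))
  · have hh : circleQuadratic q a t ≠ 0 := fun h => htR ⟨ht, h⟩
    obtain ⟨v, hv⟩ := isSquare_of_charTwo' (d / circleQuadratic q a t)
    rw [← sq] at hv
    have hdq : d ^ (q - 1) = 1 := by
      rw [← mul_eq_right₀ hd0, pow_sub_one_mul (by omega), hd]
    have hth : t ^ 2 * circleQuadratic q a t ^ (q - 1) = 1 := by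
      rw [← mul_eq_right₀ hh, mul_assoc, pow_sub_one_mul (by omega),
        sq_mul_circleQuadratic_pow hqe hF a ht]
    have hvt : v ^ (q - 1) = t := by
      refine CharTwo.sq_inj.1 ?_
      rw [pow_right_comm, ← hv, div_pow, hdq, eq_comm, eq_div_iff (pow_ne_zero _ hh), hth]
    refine ⟨v, ?_, hvt⟩
    show normTraceForm q a v = d
    rw [hQ, hvt, ← hv, div_mul_cancel₀ d hh]

theorem ncard_setOf_normTraceForm_eq_mem (hqe : q = 2 ^ e) (hF : Fintype.card F = q ^ 2)
    {a d : F} (ha : a ≠ 0) (hd : d ^ q = d) :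
    {z : F | normTraceForm q a z = d}.ncard ∈ ({1, q - 1, q + 1, 2 * q - 1} : Set ℕ) := by
  have hq := FiniteField.one_lt_of_card_eq_sq hF
  rcases eq_or_ne d 0 with rfl | hd0
  · rw [ncard_setOf_normTraceForm_eq_zero hF]
    rcases ncard_circleRoots hF ha with h | h <;> rw [h]
    · simp
    · simp only [Set.mem_insert_iff, Set.mem_singleton_iff]
      omega
  · rw [(bijOn_pow_sub_one_setOf_normTraceForm_eq hqe hF a hd hd0).ncard_eq,
      Set.ncard_sdiff fun t ht => ht.1, FiniteField.ncard_setOf_pow_add_one_eq_one hF]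
    rcases ncard_circleRoots hF ha with h | h <;> rw [h] <;> simp

end CharTwo

end NormTraceForm

theorem stmt_6 (q : ℕ) (e : ℕ) (he : 1 ≤ e) (hqe : q = 2 ^ e)
    (F : Type*) [Field F] [Fintype F]
    (hF : Fintype.card F = q ^ 2) (a b c : F) (ha : a ≠ 0) :
    Set.ncard {p : F × F | p.1 ^ (q + 1) = p.2 ^ q + p.2 ∧
        p.2 = a * p.1 ^ 2 + b * p.1 + c}
      ∈ ({1, q - 1, q + 1, 2 * q - 1} : Set ℕ) := by
  have : CharP F 2 := ringChar.of_eq <| FiniteField.even_card_iff_char_two.2 <| by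
    rw [hF, hqe]
    exact Nat.mod_eq_zero_of_dvd (dvd_pow (dvd_pow_self 2 (by omega)) two_ne_zero)
  obtain ⟨d, hd, hP⟩ := exists_normTraceForm_translate hqe hF a b c
  have hS : {p : F × F | p.1 ^ (q + 1) = p.2 ^ q + p.2 ∧ p.2 = a * p.1 ^ 2 + b * p.1 + c} =
      (fun z => (z + b ^ q, a * (z + b ^ q) ^ 2 + b * (z + b ^ q) + c)) ''
        {z | normTraceForm q a z = d} := by
    ext ⟨x, y⟩
    simp only [Set.mem_ofPred_eq, Set.mem_image, Prod.mk.injEq]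
    constructor
    · rintro ⟨hx, rfl⟩
      refine ⟨x - b ^ q, CharTwo.add_eq_zero.1 ?_, sub_add_cancel _ _, by rw [sub_add_cancel]⟩
      rw [← hP, CharTwo.add_eq_zero.2 hx]
    · rintro ⟨z, hz, rfl, rfl⟩
      refine ⟨CharTwo.add_eq_zero.1 ?_, rfl⟩
      rw [hP, add_sub_cancel_right, hz, CharTwo.add_self_eq_zero]
  rw [hS, Set.ncard_image_of_injective _ fun z₁ z₂ h => add_right_cancel (congrArg Prod.fst h)]
  exact ncard_setOf_normTraceForm_eq_mem hqe hF ha hd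
end

section
/- Let q be an odd power of a prime, let F be the finite field with q² elements, let a, c ∈ F with a ≠ 0 and c^q + c ≠ 0, and set Δ = 1 − 4·a^(q+1) (note Δ^q = Δ, so Δ lies in the subfield F_q). Let I be the cardinality of {(x,y) ∈ F×F : x^(q+1) = y^q + y and y = a·x² + c}. Then: if Δ ≠ 0 and Δ is a square in F_q (i.e. there is z with z^q = z and z² = Δ) then I = q + 1; if Δ is a non-square in F_q then I = q − 1; and if Δ = 0 then I = 0 or I = 2q. -/
/-!
Write `x̄ = x ^ q`. On the parabola `y = a x² + c` the Hermitian equation becomes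
`Q x = -(c̄ + c)` for the `𝔽_q`-valued quadratic form `Q x = ā x̄² - x̄ x + a x²` of
discriminant `Δ`. For `δ² = Δ` one has `4 ā Q = L_δ · L_{-δ}` with `L_δ x = 2 ā x̄ - (1 + δ) x`.

* If `δ ∈ 𝔽_q^×`, then `L_δ` is a bijection of `F` and `L_{-δ}` is a multiple of the conjugate of
  `L_δ`, so `Q` is a multiple of the norm of `L_δ x`: there are `q + 1` elements of a given
  nonzero norm.
* If `δ̄ = -δ`, then `L_δ` and `L_{-δ}` take values in two different eigenlines of `x ↦ x̄`, and
  `L_δ` maps the solutions bijectively onto the `q - 1` nonzero points of its line.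
* If `Δ = 0`, then `4 ā Q = L_0²` with `L_0` additive with a kernel of size `q`, so the
  solutions form zero or two cosets of that kernel.
-/

theorem IsCyclic.exists_pow_eq_of_pow_card_div_eq_one {G : Type*} [Group G] [IsCyclic G]
    [Fintype G] {n : ℕ} (hn : n ∣ Fintype.card G) {s : G}
    (hs : s ^ (Fintype.card G / n) = 1) : ∃ α : G, α ^ n = s := by
  obtain ⟨g, hg⟩ := IsCyclic.exists_generator (α := G)
  obtain ⟨m, rfl⟩ : s ∈ Submonoid.powers g := mem_powers_iff_mem_zpowers.mpr (hg s)
  obtain ⟨d, hd⟩ := hn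
  have hd0 : 0 < d := Nat.pos_of_ne_zero (by rintro rfl; simp at hd)
  have hn0 : 0 < n := Nat.pos_of_ne_zero (by rintro rfl; simp at hd)
  rw [hd, Nat.mul_div_cancel_left _ hn0, ← pow_mul] at hs
  have hnm : n * d ∣ m * d := by
    rw [← hd, ← Nat.card_eq_fintype_card, ← orderOf_eq_card_of_forall_mem_zpowers hg]
    exact orderOf_dvd_of_pow_eq_one hs
  obtain ⟨k, rfl⟩ := Nat.dvd_of_mul_dvd_mul_right hd0 hnm
  exact ⟨g ^ k, by rw [← pow_mul, mul_comm]⟩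

theorem Set.ncard_setOf_and_snd_eq {α β : Type*} (P : α → β → Prop) (f : α → β) :
    {p : α × β | P p.1 p.2 ∧ p.2 = f p.1}.ncard = {x | P x (f x)}.ncard := by
  have hinj : (fun x ↦ (x, f x)).Injective := fun _ _ h ↦ congrArg Prod.fst h
  rw [← Set.ncard_image_of_injective _ hinj]
  congr 1
  ext ⟨x, y⟩
  simp only [Set.mem_ofPred_eq, Set.mem_image, Prod.mk.injEq]
  constructor
  · rintro ⟨hP, rfl⟩
    exact ⟨x, hP, rfl, rfl⟩
  · rintro ⟨x, hP, rfl, rfl⟩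
    exact ⟨hP, rfl⟩

theorem AddMonoidHom.ncard_preimage_singleton_apply {G H : Type*} [AddGroup G] [AddGroup H]
    (f : G →+ H) (x : G) : (f ⁻¹' {f x}).ncard = (f ⁻¹' {0}).ncard := by
  rw [← Set.ncard_image_of_injective (f ⁻¹' {0}) (add_right_injective x)]
  congr 1
  ext y
  simp only [Set.mem_preimage, Set.mem_singleton_iff, Set.mem_image]
  constructor
  · intro h
    exact ⟨-x + y, by simp [h], add_neg_cancel_left x y⟩
  · rintro ⟨k, hk, rfl⟩
    simp [hk]

namespace FiniteField

variable {F : Type*} [Field F] [Fintype F] {q : ℕ}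

theorem exists_isPrimitiveRoot_of_dvd {n : ℕ}
    (hn : n ∣ Fintype.card F - 1) : ∃ ζ : F, IsPrimitiveRoot ζ n := by
  classical
  have hn0 : 0 < n := Nat.pos_of_dvd_of_pos hn (Nat.sub_pos_of_lt Fintype.one_lt_card)
  rw [← Fintype.card_units] at hn
  obtain ⟨ζ, hζ⟩ := Finset.card_pos.1 <|
    (IsCyclic.card_orderOf_eq_totient hn).symm ▸ Nat.totient_pos.2 hn0
  exact ⟨ζ, IsPrimitiveRoot.coe_units_iff.2 <|
    (Finset.mem_filter.1 hζ).2 ▸ IsPrimitiveRoot.orderOf ζ⟩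

theorem ncard_pow_eq {n : ℕ}
    (hn : n ∣ Fintype.card F - 1) {s : F} (hs : s ≠ 0)
    (hpow : s ^ ((Fintype.card F - 1) / n) = 1) : {x : F | x ^ n = s}.ncard = n := by
  classical
  obtain ⟨ζ, hζ⟩ := exists_isPrimitiveRoot_of_dvd hn
  obtain ⟨α, hα⟩ := IsCyclic.exists_pow_eq_of_pow_card_div_eq_one
    (Fintype.card_units (α := F) ▸ hn) (s := Units.mk0 s hs)
    (by ext; simpa [Fintype.card_units] using hpow)
  have hn0 : 0 < n := Nat.pos_of_dvd_of_pos hn (Nat.sub_pos_of_lt Fintype.one_lt_card)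
  rw [← Polynomial.nthRootsFinset_toSet hn0, Set.ncard_coe_finset,
    Polynomial.nthRootsFinset_def, Multiset.toFinset_card_of_nodup (hζ.nthRoots_nodup hs),
    hζ.nthRoots_eq (α := (α : F)) (by simpa using congrArg Units.val hα),
    Multiset.card_map, Multiset.card_range]

theorem add_pow_of_card_eq_sq (hF : Fintype.card F = q ^ 2) (x y : F) :
    (x + y) ^ q = x ^ q + y ^ q := by
  obtain ⟨n, hp, hn⟩ := FiniteField.card F (ringChar F)
  have hq : q ∣ ringChar F ^ (n : ℕ) := hn ▸ hF ▸ dvd_pow_self q two_ne_zero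
  obtain ⟨m, -, rfl⟩ := (Nat.dvd_prime_pow hp).1 hq
  have := Fact.mk hp
  exact add_pow_char_pow x y _ _

def conjHom (hF : Fintype.card F = q ^ 2) : F →+* F where
  toFun x := x ^ q
  map_one' := one_pow q
  map_mul' x y := mul_pow x y q
  map_zero' := zero_pow (Nat.ne_zero_of_lt (one_lt_of_card_eq_sq hF))
  map_add' := add_pow_of_card_eq_sq hF

theorem sub_pow_of_card_eq_sq (hF : Fintype.card F = q ^ 2) (x y : F) :
    (x - y) ^ q = x ^ q - y ^ q :=
  map_sub (conjHom hF) x y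

theorem neg_pow_of_card_eq_sq (hF : Fintype.card F = q ^ 2) (x : F) : (-x) ^ q = -x ^ q :=
  map_neg (conjHom hF) x

theorem ofNat_pow_of_card_eq_sq (hF : Fintype.card F = q ^ 2) (n : ℕ) [n.AtLeastTwo] :
    (OfNat.ofNat n : F) ^ q = OfNat.ofNat n :=
  map_ofNat (conjHom hF) n

theorem two_ne_zero_of_card_eq_sq (hF : Fintype.card F = q ^ 2) (hq : Odd q) : (2 : F) ≠ 0 :=
  Ring.two_ne_zero fun h ↦ by
    have := (even_card_iff_char_two.1 h)
    rw [hF] at this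
    exact Nat.not_even_iff_odd.2 (hq.pow) (Nat.even_iff.2 this)

theorem ncard_pow_succ_eq (hF : Fintype.card F = q ^ 2) {ρ : F} (hρ : ρ ≠ 0)
    (hρq : ρ ^ q = ρ) : {u : F | u ^ (q + 1) = ρ}.ncard = q + 1 := by
  have hq := one_lt_of_card_eq_sq hF
  have hρ1 : ρ ^ (q - 1) = 1 :=
    mul_right_cancel₀ hρ (by rw [← pow_succ, Nat.sub_add_cancel hq.le, hρq, one_mul])
  have hcard : Fintype.card F - 1 = (q + 1) * (q - 1) := by rw [hF, ← Nat.sq_sub_sq, one_pow]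
  refine ncard_pow_eq ⟨q - 1, hcard⟩ hρ ?_
  rwa [hcard, Nat.mul_div_cancel_left _ (Nat.succ_pos q)]

theorem ncard_pow_pred_eq (hF : Fintype.card F = q ^ 2) {s : F} (hs : s ≠ 0)
    (hsq : s ^ (q + 1) = 1) : {u : F | u ^ (q - 1) = s}.ncard = q - 1 := by
  have hq : 0 < q - 1 := Nat.sub_pos_of_lt (one_lt_of_card_eq_sq hF)
  have hcard : Fintype.card F - 1 = (q - 1) * (q + 1) := by
    rw [hF, mul_comm, ← Nat.sq_sub_sq, one_pow]
  refine ncard_pow_eq ⟨q + 1, hcard⟩ hs ?_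
  rwa [hcard, Nat.mul_div_cancel_left _ hq]

theorem exists_sq_eq_and_pow_eq_neg (hF : Fintype.card F = q ^ 2) (hq : Odd q) {Δ : F}
    (hΔ0 : Δ ≠ 0) (hΔq : Δ ^ q = Δ)
    (hns : ¬∃ z : F, z ^ q = z ∧ z ^ 2 = Δ) : ∃ δ : F, δ ^ 2 = Δ ∧ δ ^ q = -δ := by
  obtain ⟨u, hu : u ^ (q + 1) = Δ⟩ := Set.nonempty_of_ncard_ne_zero <| by
    rw [ncard_pow_succ_eq hF hΔ0 hΔq]
    exact q.succ_ne_zero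
  obtain ⟨m, hm⟩ := hq
  have hδ : (u ^ (m + 1)) ^ 2 = Δ := by
    rw [← pow_mul, ← hu]
    congr 1
    omega
  have hconj : ((u ^ (m + 1)) ^ q) ^ 2 = (u ^ (m + 1)) ^ 2 := by rw [pow_right_comm, hδ, hΔq]
  exact ⟨_, hδ, (sq_eq_sq_iff_eq_or_eq_neg.1 hconj).resolve_left fun h ↦ hns ⟨_, h, hδ⟩⟩

end FiniteField

open FiniteField

section Parabola

variable {F : Type*} [Field F] {q : ℕ}

def parabolaForm (q : ℕ) (a x : F) : F := a ^ q * (x ^ q) ^ 2 - x ^ q * x + a * x ^ 2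

def linearFactor (q : ℕ) (a δ x : F) : F := 2 * a ^ q * x ^ q - (1 + δ) * x

theorem linearFactor_mul_linearFactor_neg {a δ : F} (hδ : δ ^ 2 = 1 - 4 * (a * a ^ q)) (x : F) :
    linearFactor q a δ x * linearFactor q a (-δ) x = 4 * a ^ q * parabolaForm q a x := by
  unfold linearFactor parabolaForm
  linear_combination -x ^ 2 * hδ

theorem linearFactor_neg_sub_linearFactor (a δ x : F) :
    linearFactor q a (-δ) x - linearFactor q a δ x = 2 * δ * x := by
  unfold linearFactor
  ring

theorem four_ne_zero_of_two_ne_zero (h2 : (2 : F) ≠ 0) : (4 : F) ≠ 0 :=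
  (by norm_num : (2 * 2 : F) = 4) ▸ mul_ne_zero h2 h2

theorem one_add_ne_zero_of_sq_eq (h2 : (2 : F) ≠ 0) {a δ : F} (ha : a ≠ 0)
    (hδ : δ ^ 2 = 1 - 4 * (a * a ^ q)) : 1 + δ ≠ 0 := fun h ↦
  mul_ne_zero (four_ne_zero_of_two_ne_zero h2) (mul_ne_zero ha (pow_ne_zero q ha))
    (by linear_combination (1 - δ) * h + hδ)

theorem parabolaForm_eq_neg_iff (h2 : (2 : F) ≠ 0) {a δ : F} (ha : a ≠ 0)
    (hδ : δ ^ 2 = 1 - 4 * (a * a ^ q)) (T x : F) :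
    parabolaForm q a x = -T ↔
      linearFactor q a δ x * linearFactor q a (-δ) x = -(4 * a ^ q * T) := by
  rw [linearFactor_mul_linearFactor_neg hδ, ← mul_neg,
    mul_right_inj' (mul_ne_zero (four_ne_zero_of_two_ne_zero h2) (pow_ne_zero q ha))]

variable [Fintype F]

theorem hermitian_parabola_iff (hF : Fintype.card F = q ^ 2) (a c x : F) :
    x ^ (q + 1) = (a * x ^ 2 + c) ^ q + (a * x ^ 2 + c) ↔ parabolaForm q a x = -(c ^ q + c) := by
  rw [add_pow_of_card_eq_sq hF, mul_pow, pow_right_comm, pow_succ, parabolaForm]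
  constructor <;> intro h <;> linear_combination -h

theorem linearFactor_sub (hF : Fintype.card F = q ^ 2) (a δ x y : F) :
    linearFactor q a δ (x - y) = linearFactor q a δ x - linearFactor q a δ y := by
  simp only [linearFactor, sub_pow_of_card_eq_sq hF]
  ring

theorem linearFactor_pow_of_pow_eq_self (hF : Fintype.card F = q ^ 2) {a z : F} (hzq : z ^ q = z)
    (x : F) : linearFactor q a z x ^ q = 2 * a * x - (1 + z) * x ^ q := by
  simp only [linearFactor, sub_pow_of_card_eq_sq hF, add_pow_of_card_eq_sq hF, mul_pow, one_pow,
    ofNat_pow_of_card_eq_sq hF, pow_pow_of_card_eq_sq hF, hzq]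

theorem linearFactor_pow_succ (hF : Fintype.card F = q ^ 2) {a z : F} (hzq : z ^ q = z)
    (hz : z ^ 2 = 1 - 4 * (a * a ^ q)) (x : F) :
    linearFactor q a z x ^ (q + 1) = -2 * (1 + z) * parabolaForm q a x := by
  rw [pow_succ, linearFactor_pow_of_pow_eq_self hF hzq]
  unfold linearFactor parabolaForm
  linear_combination (x * x ^ q) * hz

theorem linearFactor_pow_of_pow_eq_neg (hF : Fintype.card F = q ^ 2) (h2 : (2 : F) ≠ 0) {a δ : F}
    (ha : a ≠ 0) (hδq : δ ^ q = -δ) (hδ : δ ^ 2 = 1 - 4 * (a * a ^ q)) (x : F) :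
    linearFactor q a δ x ^ q = -(1 - δ) / (2 * a ^ q) * linearFactor q a δ x := by
  have haq : a ^ q ≠ 0 := pow_ne_zero q ha
  simp only [linearFactor, sub_pow_of_card_eq_sq hF, add_pow_of_card_eq_sq hF, mul_pow, one_pow,
    ofNat_pow_of_card_eq_sq hF, pow_pow_of_card_eq_sq hF, hδq]
  field_simp
  linear_combination x * hδ

theorem ncard_parabolaForm_eq_of_pow_eq_self (hF : Fintype.card F = q ^ 2) (h2 : (2 : F) ≠ 0)
    {a z : F} (ha : a ≠ 0) (hz0 : z ≠ 0) (hzq : z ^ q = z) (hz : z ^ 2 = 1 - 4 * (a * a ^ q))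
    {T : F} (hT0 : T ≠ 0) (hTq : T ^ q = T) :
    {x : F | parabolaForm q a x = -T}.ncard = q + 1 := by
  have hz1 : 1 + z ≠ 0 := one_add_ne_zero_of_sq_eq h2 ha hz
  have hker : ∀ w, linearFactor q a z w = 0 → w = 0 := by
    intro w hw
    have hwq := linearFactor_pow_of_pow_eq_self hF (a := a) hzq w
    rw [hw, zero_pow (Nat.ne_zero_of_lt (one_lt_of_card_eq_sq hF))] at hwq
    unfold linearFactor at hw
    have : 2 * z * (1 + z) * w = 0 := by
      linear_combination (-(1 + z)) * hw + 2 * a ^ q * hwq + w * hz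
    simpa [h2, hz0, hz1] using this
  have hinj : Function.Injective (linearFactor q a z) := fun x y hxy ↦
    sub_eq_zero.1 (hker _ (by rw [linearFactor_sub hF, hxy, sub_self]))
  have hsurj := Finite.injective_iff_surjective.1 hinj
  have hS : {x : F | parabolaForm q a x = -T} =
      linearFactor q a z ⁻¹' {u | u ^ (q + 1) = 2 * (1 + z) * T} := by
    ext x
    simp only [Set.mem_preimage, Set.mem_ofPred_eq, linearFactor_pow_succ hF hzq hz]
    constructor
    · intro h
      rw [h]
      ring
    · intro h
      refine mul_left_cancel₀ (mul_ne_zero (neg_ne_zero.2 h2) hz1) ?_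
      linear_combination h
  rw [hS, Set.ncard_preimage_of_injective_subset_range hinj (by simp [hsurj.range_eq])]
  refine ncard_pow_succ_eq hF (mul_ne_zero (mul_ne_zero h2 hz1) hT0) ?_
  simp only [mul_pow, add_pow_of_card_eq_sq hF, one_pow, ofNat_pow_of_card_eq_sq hF, hzq, hTq]

theorem linearFactor_sub_div_eq (hF : Fintype.card F = q ^ 2) (h2 : (2 : F) ≠ 0) {a δ : F}
    (ha : a ≠ 0) (hδ0 : δ ≠ 0) (hδq : δ ^ q = -δ) (hδ : δ ^ 2 = 1 - 4 * (a * a ^ q)) {u v : F}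
    (hu : u ^ q = -(1 - δ) / (2 * a ^ q) * u) (hv : v ^ q = -(1 + δ) / (2 * a ^ q) * v) :
    linearFactor q a δ ((v - u) / (2 * δ)) = u ∧ linearFactor q a (-δ) ((v - u) / (2 * δ)) = v := by
  have haq : a ^ q ≠ 0 := pow_ne_zero q ha
  set x := (v - u) / (2 * δ)
  have hdiff : linearFactor q a (-δ) x - linearFactor q a δ x = v - u := by
    rw [linearFactor_neg_sub_linearFactor]
    exact mul_div_cancel₀ _ (mul_ne_zero h2 hδ0)
  have hU := linearFactor_pow_of_pow_eq_neg hF h2 ha hδq hδ x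
  have hV := linearFactor_pow_of_pow_eq_neg hF h2 ha (δ := -δ)
    (by rw [neg_pow_of_card_eq_sq hF, hδq]) (by rwa [neg_sq]) x
  rw [sub_neg_eq_add] at hV
  set e := linearFactor q a δ x - u with he
  -- `e` lies in the eigenlines of `y ↦ y ^ q` for two different eigenvalues
  have hes : e ^ q = -(1 - δ) / (2 * a ^ q) * e := by
    rw [he, sub_pow_of_card_eq_sq hF, hU, hu]
    ring
  have het : e ^ q = -(1 + δ) / (2 * a ^ q) * e := by
    rw [show e = linearFactor q a (-δ) x - v by linear_combination -hdiff,
      sub_pow_of_card_eq_sq hF, hV, hv]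
    ring
  have hst : -(1 - δ) / (2 * a ^ q) - -(1 + δ) / (2 * a ^ q) = δ / a ^ q := by
    field_simp
    ring
  have he0 : e = 0 := by
    have : δ / a ^ q * e = 0 := by rw [← hst, sub_mul, ← hes, ← het, sub_self]
    exact (mul_eq_zero.1 this).resolve_left (div_ne_zero hδ0 haq)
  have hxu : linearFactor q a δ x = u := by rw [← sub_eq_zero, ← he, he0]
  exact ⟨hxu, by linear_combination hdiff + hxu⟩

theorem ncard_parabolaForm_eq_of_pow_eq_neg (hF : Fintype.card F = q ^ 2) (h2 : (2 : F) ≠ 0)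
    {a δ : F} (ha : a ≠ 0) (hδ0 : δ ≠ 0) (hδq : δ ^ q = -δ) (hδ : δ ^ 2 = 1 - 4 * (a * a ^ q))
    {T : F} (hT0 : T ≠ 0) (hTq : T ^ q = T) :
    {x : F | parabolaForm q a x = -T}.ncard = q - 1 := by
  have haq : a ^ q ≠ 0 := pow_ne_zero q ha
  have hq := one_lt_of_card_eq_sq hF
  have hδ1 : 1 - δ ≠ 0 := by
    simpa [← sub_eq_add_neg] using one_add_ne_zero_of_sq_eq h2 ha (δ := -δ) (by rwa [neg_sq])
  have hU := linearFactor_pow_of_pow_eq_neg hF h2 ha hδq hδ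
  set s := -(1 - δ) / (2 * a ^ q) with hs
  have hs0 : s ≠ 0 := div_ne_zero (neg_ne_zero.2 hδ1) (mul_ne_zero h2 haq)
  have hs1 : s ^ (q + 1) = 1 := by
    rw [pow_succ, hs, div_pow, neg_pow_of_card_eq_sq hF, sub_pow_of_card_eq_sq hF, mul_pow,
      one_pow, hδq, ofNat_pow_of_card_eq_sq hF, pow_pow_of_card_eq_sq hF]
    field_simp
    linear_combination -hδ
  have hS := parabolaForm_eq_neg_iff h2 ha hδ T
  have hne : ∀ x, parabolaForm q a x = -T → linearFactor q a δ x ≠ 0 := fun x hx h ↦ by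
    rw [hS, h, zero_mul, eq_comm, neg_eq_zero] at hx
    exact mul_ne_zero (mul_ne_zero (four_ne_zero_of_two_ne_zero h2) haq) hT0 hx
  refine (Set.BijOn.ncard_eq (f := linearFactor q a δ) ⟨?_, ?_, ?_⟩).trans
    (ncard_pow_pred_eq hF hs0 hs1)
  · intro x hx
    exact mul_right_cancel₀ (hne x hx) (by rw [← pow_succ, Nat.sub_add_cancel hq.le, hU])
  · intro x hx y hy hxy
    have hV : linearFactor q a (-δ) x = linearFactor q a (-δ) y :=
      mul_left_cancel₀ (hne x hx) (by rw [(hS x).1 hx, hxy, (hS y).1 hy])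
    refine mul_left_cancel₀ (mul_ne_zero h2 hδ0) ?_
    rw [← linearFactor_neg_sub_linearFactor, ← linearFactor_neg_sub_linearFactor, hxy, hV]
  · intro u (hu : u ^ (q - 1) = s)
    have hu0 : u ≠ 0 := by
      rintro rfl
      rw [zero_pow (by omega)] at hu
      exact hs0 hu.symm
    have huq : u ^ q = s * u := by rw [← Nat.sub_add_cancel hq.le, pow_succ, hu]
    have hvq : (-(4 * a ^ q * T) / u) ^ q = -(1 + δ) / (2 * a ^ q) * (-(4 * a ^ q * T) / u) := by
      rw [div_pow, neg_pow_of_card_eq_sq hF, mul_pow, mul_pow, ofNat_pow_of_card_eq_sq hF,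
        pow_pow_of_card_eq_sq hF, hTq, huq, hs]
      field_simp
      linear_combination 4 * hδ
    obtain ⟨hxu, hxv⟩ := linearFactor_sub_div_eq hF h2 ha hδ0 hδq hδ huq hvq
    refine ⟨_, (hS _).2 ?_, hxu⟩
    rw [hxu, hxv]
    field_simp

theorem ncard_linearFactor_eq_zero (hF : Fintype.card F = q ^ 2) (h2 : (2 : F) ≠ 0) {a δ : F}
    (ha : a ≠ 0) (hδq : δ ^ q = -δ) (hδ : δ ^ 2 = 1 - 4 * (a * a ^ q)) :
    {y : F | linearFactor q a δ y = 0}.ncard = q := by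
  have hq := one_lt_of_card_eq_sq hF
  have haq : a ^ q ≠ 0 := pow_ne_zero q ha
  have hδ1 : 1 + δ ≠ 0 := one_add_ne_zero_of_sq_eq h2 ha hδ
  set r := (1 + δ) / (2 * a ^ q) with hr
  have hr0 : r ≠ 0 := div_ne_zero hδ1 (mul_ne_zero h2 haq)
  have hr1 : r ^ (q + 1) = 1 := by
    rw [pow_succ, hr, div_pow, add_pow_of_card_eq_sq hF, one_pow, hδq, mul_pow,
      ofNat_pow_of_card_eq_sq hF, pow_pow_of_card_eq_sq hF]
    field_simp
    linear_combination -hδ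
  have hker : {y : F | linearFactor q a δ y = 0} = insert 0 {y | y ^ (q - 1) = r} := by
    ext y
    simp only [Set.mem_ofPred_eq, Set.mem_insert_iff, linearFactor]
    rcases eq_or_ne y 0 with rfl | hy
    · simp [zero_pow (Nat.ne_zero_of_lt hq)]
    · have hyq : y ^ q = y ^ (q - 1) * y := by rw [← pow_succ, Nat.sub_add_cancel hq.le]
      rw [or_iff_right hy, hr, eq_div_iff (mul_ne_zero h2 haq), hyq]
      constructor
      · exact fun h ↦ mul_right_cancel₀ hy (by linear_combination h)
      · exact fun h ↦ by linear_combination y * h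
  have h0 : (0 : F) ∉ {y | y ^ (q - 1) = r} := by
    simpa [zero_pow (Nat.sub_pos_of_lt hq).ne'] using hr0.symm
  rw [hker, Set.ncard_insert_of_notMem h0, ncard_pow_pred_eq hF hr0 hr1]
  omega

theorem ncard_parabolaForm_of_disc_eq_zero (hF : Fintype.card F = q ^ 2) (h2 : (2 : F) ≠ 0)
    {a : F} (hΔ : 1 - 4 * (a * a ^ q) = 0) {T : F} (hT0 : T ≠ 0) :
    {x : F | parabolaForm q a x = -T}.ncard = 0 ∨
      {x : F | parabolaForm q a x = -T}.ncard = 2 * q := by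
  have ha : a ≠ 0 := by
    rintro rfl
    simp at hΔ
  have h0 : (0 : F) ^ 2 = 1 - 4 * (a * a ^ q) := by rw [hΔ]; ring
  have h0q : (0 : F) ^ q = -0 := by
    rw [neg_zero, zero_pow (Nat.ne_zero_of_lt (one_lt_of_card_eq_sq hF))]
  let L : F →+ F := AddMonoidHom.ofMapSub (linearFactor q a 0) (linearFactor_sub hF a 0)
  have hS : {x : F | parabolaForm q a x = -T} = L ⁻¹' {w | w ^ 2 = -(4 * a ^ q * T)} := by
    ext x
    simp only [Set.mem_preimage, Set.mem_ofPred_eq, parabolaForm_eq_neg_iff h2 ha h0, neg_zero,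
      ← sq, L, AddMonoidHom.coe_of_map_sub]
  rcases Set.eq_empty_or_nonempty {x : F | parabolaForm q a x = -T} with h | ⟨x₀, hx₀⟩
  · exact Or.inl (by rw [h, Set.ncard_empty])
  right
  rw [hS] at hx₀ ⊢
  replace hx₀ : L x₀ ^ 2 = -(4 * a ^ q * T) := hx₀
  have hx₀' : L x₀ ≠ 0 := fun h ↦ by
    rw [h, zero_pow two_ne_zero, eq_comm, neg_eq_zero] at hx₀
    exact mul_ne_zero (mul_ne_zero (four_ne_zero_of_two_ne_zero h2) (pow_ne_zero q ha)) hT0 hx₀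
  have hsplit : L ⁻¹' {w | w ^ 2 = -(4 * a ^ q * T)} = L ⁻¹' {L x₀} ∪ L ⁻¹' {L (-x₀)} := by
    ext x
    simp only [Set.mem_preimage, Set.mem_ofPred_eq, Set.mem_union, Set.mem_singleton_iff,
      map_neg, ← hx₀, sq_eq_sq_iff_eq_or_eq_neg]
  have hdisj : Disjoint (L ⁻¹' {L x₀}) (L ⁻¹' {L (-x₀)}) := by
    refine Disjoint.preimage L (Set.disjoint_singleton.2 fun h ↦ hx₀' ?_)
    rw [map_neg, eq_neg_iff_add_eq_zero, ← two_mul] at h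
    exact (mul_eq_zero.1 h).resolve_left h2
  rw [hsplit, Set.ncard_union_eq hdisj, L.ncard_preimage_singleton_apply,
    L.ncard_preimage_singleton_apply, ← two_mul]
  congr 1
  exact ncard_linearFactor_eq_zero hF h2 ha h0q h0

end Parabola

theorem stmt_9_general (q : ℕ) (hodd : Odd q) (F : Type*) [Field F] [Fintype F]
    (hF : Fintype.card F = q ^ 2) (a c : F) (ha : a ≠ 0) (hc : c ^ q + c ≠ 0)
    (Δ : F) (hΔ : Δ = 1 - 4 * a ^ (q + 1)) (I : ℕ)
    (hI : I = Set.ncard {p : F × F | p.1 ^ (q + 1) = p.2 ^ q + p.2 ∧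
        p.2 = a * p.1 ^ 2 + c}) :
    (Δ ≠ 0 → (∃ z : F, z ^ q = z ∧ z ^ 2 = Δ) → I = q + 1) ∧
    ((¬ ∃ z : F, z ^ q = z ∧ z ^ 2 = Δ) → I = q - 1) ∧
    (Δ = 0 → I = 0 ∨ I = 2 * q) := by
  have h2 : (2 : F) ≠ 0 := two_ne_zero_of_card_eq_sq hF hodd
  have hTq : (c ^ q + c) ^ q = c ^ q + c := by
    rw [add_pow_of_card_eq_sq hF, pow_pow_of_card_eq_sq hF, add_comm]
  rw [Set.ncard_setOf_and_snd_eq (fun x y ↦ x ^ (q + 1) = y ^ q + y) (fun x ↦ a * x ^ 2 + c)] at hI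
  simp only [hermitian_parabola_iff hF] at hI
  rw [pow_succ'] at hΔ
  subst hI hΔ
  refine ⟨fun hΔ0 ⟨z, hzq, hz⟩ ↦ ?_, fun hns ↦ ?_, fun hΔ0 ↦ ?_⟩
  · refine ncard_parabolaForm_eq_of_pow_eq_self hF h2 ha ?_ hzq hz hc hTq
    rintro rfl
    exact hΔ0 (by simpa using hz.symm)
  · have hΔ0 : 1 - 4 * (a * a ^ q) ≠ 0 := fun h ↦
      hns ⟨0, zero_pow (Nat.ne_zero_of_lt (one_lt_of_card_eq_sq hF)), by rw [h]; ring⟩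
    have hΔq : (1 - 4 * (a * a ^ q)) ^ q = 1 - 4 * (a * a ^ q) := by
      rw [sub_pow_of_card_eq_sq hF, one_pow, mul_pow, mul_pow, ofNat_pow_of_card_eq_sq hF,
        pow_pow_of_card_eq_sq hF, mul_comm (a ^ q)]
    obtain ⟨δ, hδ, hδq⟩ := exists_sq_eq_and_pow_eq_neg hF hodd hΔ0 hΔq hns
    refine ncard_parabolaForm_eq_of_pow_eq_neg hF h2 ha ?_ hδq hδ hc hTq
    rintro rfl
    exact hΔ0 (by simpa using hδ.symm)
  · exact ncard_parabolaForm_of_disc_eq_zero hF h2 hΔ0 hc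

theorem stmt_9 (q : ℕ) (hq : IsPrimePow q) (hodd : Odd q) (F : Type*) [Field F] [Fintype F]
    (hF : Fintype.card F = q ^ 2) (a c : F) (ha : a ≠ 0) (hc : c ^ q + c ≠ 0)
    (Δ : F) (hΔ : Δ = 1 - 4 * a ^ (q + 1)) (I : ℕ)
    (hI : I = Set.ncard {p : F × F | p.1 ^ (q + 1) = p.2 ^ q + p.2 ∧
        p.2 = a * p.1 ^ 2 + c}) :
    (Δ ≠ 0 → (∃ z : F, z ^ q = z ∧ z ^ 2 = Δ) → I = q + 1) ∧
    ((¬ ∃ z : F, z ^ q = z ∧ z ^ 2 = Δ) → I = q - 1) ∧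
    (Δ = 0 → I = 0 ∨ I = 2 * q) :=
  stmt_9_general q hodd F hF a c ha hc Δ hΔ I hI
end

section
/- Let q be an odd power of a prime and let F be the finite field with q² elements. Let a, v ∈ F be such that (2a)^(q+1) = 1 (i.e. N(2a) = 1) and v^q + 2·a·v ≠ 0. Then the Hermitian curve intersects the parabola y = a·(x+v)² in exactly q points, i.e. the set {(x,y) ∈ F×F : x^(q+1) = y^q + y and y = a·(x+v)²} has cardinality q. -/
/-!
Let `σ` be the Frobenius `x ↦ x ^ q`, an involution of `F`, and put `u = x + v`. As `N(2a) = 1`,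
the point `(x, a u²)` lies on the Hermitian curve iff `s² = 4a (N v - t)`, where
`s = σ u - 2 a u` and `t = v σ u + σ v u`. Because `σ v + 2 a v ≠ 0`, the additive map
`u ↦ (s, t)` is a bijection from `F` onto `L × F_q`, where `L = {s | 2 a σ s + s = 0}`; and for
`s ∈ L` the value `t = N v - s² / (4a)` always lies in `F_q`. So the intersection is in
bijection with `L`. Both `L` and `F_q` are root sets of polynomials of degree `q` and the
product of their sizes is `q²`, hence `|L| = q`.
-/

open Polynomial in
theorem ncard_setOf_mul_pow_add_mul_eq_zero_le {K : Type*} [Field K] {q : ℕ} (hq : 1 < q)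
    {c : K} (hc : c ≠ 0) (d : K) : {x : K | c * x ^ q + d * x = 0}.ncard ≤ q := by
  have hlt : (C d * X).natDegree < (C c * X ^ q).natDegree := by
    rw [natDegree_C_mul_X_pow q c hc]
    exact (natDegree_C_mul_le d X).trans_lt (natDegree_X_le.trans_lt hq)
  have hdeg : (C c * X ^ q + C d * X).natDegree = q := by
    rw [natDegree_add_eq_left_of_natDegree_lt hlt, natDegree_C_mul_X_pow q c hc]
  have hne : C c * X ^ q + C d * X ≠ 0 := ne_zero_of_natDegree_gt (hdeg ▸ hq)
  convert hdeg ▸ ncard_rootSet_le (C c * X ^ q + C d * X) K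
  ext x
  simp [mem_rootSet, hne]

section CommRing

variable {R : Type*} [CommRing R] (σ : R →+* R) {a : R}

theorem conj_mul_self_eq_iff_sq_eq (ha : 4 * (σ a * a) = 1) (x v : R) :
    σ x * x = σ (a * (x + v) ^ 2) + a * (x + v) ^ 2 ↔
      (σ (x + v) - 2 * a * (x + v)) ^ 2 =
        4 * a * (σ v * v - (v * σ (x + v) + σ v * (x + v))) := by
  obtain ⟨u, rfl⟩ : ∃ u, x = u - v := ⟨x + v, by ring⟩
  simp only [sub_add_cancel, map_sub, map_mul, map_pow]
  constructor <;> intro h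
  · linear_combination (-4 * a) * h - σ u ^ 2 * ha
  · linear_combination (-σ a) * h
      - ((σ u - σ v) * (u - v) - (σ a * σ u ^ 2 + a * u ^ 2) + σ a * σ u ^ 2) * ha

theorem two_mul_conj_add_eq_zero (hσ : ∀ x, σ (σ x) = x) (ha : 4 * (σ a * a) = 1) (u : R) :
    2 * a * σ (σ u - 2 * a * u) + (σ u - 2 * a * u) = 0 := by
  simp only [map_sub, map_mul, map_ofNat, hσ]
  linear_combination (-σ u) * ha

theorem conj_trace_eq_self (hσ : ∀ x, σ (σ x) = x) (u v : R) :
    σ (v * σ u + σ v * u) = v * σ u + σ v * u := by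
  simp only [map_add, map_mul, hσ]
  ring

theorem conj_norm_sub_eq_self (hσ : ∀ x, σ (σ x) = x) (ha : 4 * (σ a * a) = 1) {s : R}
    (hs : 2 * a * σ s + s = 0) (v : R) :
    σ (σ v * v - σ a * s ^ 2) = σ v * v - σ a * s ^ 2 := by
  simp only [map_sub, map_mul, map_pow, hσ]
  linear_combination (σ a * (s - 2 * a * σ s)) * hs + a * σ s ^ 2 * ha

end CommRing

section Field

variable {F : Type*} [Field F] (σ : F →+* F) {a v : F}

theorem conj_coords_injective (hv : σ v + 2 * a * v ≠ 0) :
    Function.Injective fun u => (σ u - 2 * a * u, v * σ u + σ v * u) := by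
  intro u u' h
  simp only [Prod.mk.injEq] at h
  have : (u - u') * (σ v + 2 * a * v) = 0 := by linear_combination h.2 - v * h.1
  exact sub_eq_zero.mp ((mul_eq_zero.mp this).resolve_right hv)

theorem exists_conj_coords_eq (hσ : ∀ x, σ (σ x) = x) (ha : 4 * (σ a * a) = 1)
    (hv : σ v + 2 * a * v ≠ 0) {s t : F} (hs : 2 * a * σ s + s = 0) (ht : σ t = t) :
    ∃ u, (σ u - 2 * a * u, v * σ u + σ v * u) = (s, t) := by
  -- Cramer's rule for the linear system in the unknowns `σ u` and `u`
  set u := (t - v * s) / (σ v + 2 * a * v)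
  have hu : u * (σ v + 2 * a * v) = t - v * s := div_mul_cancel₀ _ hv
  have hσu : σ u * (σ v + 2 * a * v) = 2 * a * t + σ v * s := by
    have h := congrArg σ hu
    simp only [map_sub, map_mul, map_add, map_ofNat, hσ, ht] at h
    linear_combination 2 * a * h - σ u * σ v * ha - σ v * hs
  refine ⟨u, Prod.ext (mul_right_cancel₀ hv ?_) (mul_right_cancel₀ hv ?_)⟩
  · linear_combination hσu - 2 * a * hu
  · linear_combination v * hσu + σ v * hu

theorem bijOn_hermitian_inter_parabola (hσ : ∀ x, σ (σ x) = x) (ha : 4 * (σ a * a) = 1)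
    (hv : σ v + 2 * a * v ≠ 0) :
    Set.BijOn (fun p : F × F => σ (p.1 + v) - 2 * a * (p.1 + v))
      {p | σ p.1 * p.1 = σ p.2 + p.2 ∧ p.2 = a * (p.1 + v) ^ 2} {s | 2 * a * σ s + s = 0} := by
  have h4a : 4 * a ≠ 0 := right_ne_zero_of_mul_eq_one (a := σ a) (by linear_combination ha)
  refine ⟨fun p _ => two_mul_conj_add_eq_zero σ hσ ha _, ?_, fun s hs => ?_⟩
  · rintro p ⟨hp, hp2⟩ p' ⟨hp', hp2'⟩ hs
    rw [hp2, conj_mul_self_eq_iff_sq_eq σ ha] at hp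
    rw [hp2', conj_mul_self_eq_iff_sq_eq σ ha] at hp'
    have ht : v * σ (p.1 + v) + σ v * (p.1 + v) = v * σ (p'.1 + v) + σ v * (p'.1 + v) := by
      have := mul_left_cancel₀ h4a (hp.symm.trans ((congrArg (· ^ 2) hs).trans hp'))
      linear_combination -this
    have h1 : p.1 = p'.1 := add_right_cancel (conj_coords_injective σ hv (Prod.ext hs ht))
    exact Prod.ext h1 (by rw [hp2, hp2', h1])
  · obtain ⟨u, hu⟩ := exists_conj_coords_eq σ hσ ha hv hs (conj_norm_sub_eq_self σ hσ ha hs v)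
    simp only [Prod.mk.injEq] at hu
    refine ⟨(u - v, a * (u - v + v) ^ 2), ⟨(conj_mul_self_eq_iff_sq_eq σ ha _ _).mpr ?_, rfl⟩, ?_⟩
    · simp only [sub_add_cancel, hu.1, hu.2]
      linear_combination (-s ^ 2) * ha
    · simp only [sub_add_cancel, hu.1]

theorem ncard_setOf_two_mul_conj_add_eq_zero [Finite F] {q : ℕ} (hq : 1 < q)
    (hF : Nat.card F = q ^ 2) (hσq : ∀ x, σ x = x ^ q) (hσ : ∀ x, σ (σ x) = x)
    (ha : 4 * (σ a * a) = 1) (hv : σ v + 2 * a * v ≠ 0) :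
    {s | 2 * a * σ s + s = 0}.ncard = q := by
  have hL : {s | 2 * a * σ s + s = 0}.ncard ≤ q := by
    have h2a : 2 * a ≠ 0 := right_ne_zero_of_mul_eq_one (a := 2 * σ a) (by linear_combination ha)
    simpa [hσq] using ncard_setOf_mul_pow_add_mul_eq_zero_le hq h2a 1
  have hT : {t | σ t = t}.ncard ≤ q := by
    convert ncard_setOf_mul_pow_add_mul_eq_zero_le hq one_ne_zero (-1 : F) using 2
    ext t
    simp [hσq, ← sub_eq_add_neg, sub_eq_zero]
  have hcard : q ^ 2 ≤ {s | 2 * a * σ s + s = 0}.ncard * {t | σ t = t}.ncard := by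
    rw [← hF, ← Set.ncard_univ, ← Set.ncard_prod]
    exact Set.ncard_le_ncard_of_injOn (fun u => (σ u - 2 * a * u, v * σ u + σ v * u))
      (fun u _ => ⟨two_mul_conj_add_eq_zero σ hσ ha u, conj_trace_eq_self σ hσ u v⟩)
      (conj_coords_injective σ hv).injOn
  nlinarith

theorem ncard_hermitian_inter_parabola [Finite F] {q : ℕ} (hq : 1 < q)
    (hF : Nat.card F = q ^ 2) (hσq : ∀ x, σ x = x ^ q) (hσ : ∀ x, σ (σ x) = x)
    (ha : 4 * (σ a * a) = 1) (hv : σ v + 2 * a * v ≠ 0) :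
    {p : F × F | σ p.1 * p.1 = σ p.2 + p.2 ∧ p.2 = a * (p.1 + v) ^ 2}.ncard = q :=
  (bijOn_hermitian_inter_parabola σ hσ ha hv).ncard_eq.trans
    (ncard_setOf_two_mul_conj_add_eq_zero σ hq hF hσq hσ ha hv)

end Field

theorem stmt_10_general (q : ℕ) (hq : IsPrimePow q) (F : Type*) [Field F] [Fintype F]
    (hF : Fintype.card F = q ^ 2) (a v : F)
    (h1 : (2 * a) ^ (q + 1) = 1) (h2 : v ^ q + 2 * a * v ≠ 0) :
    Set.ncard {p : F × F | p.1 ^ (q + 1) = p.2 ^ q + p.2 ∧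
        p.2 = a * (p.1 + v) ^ 2} = q := by
  have hq1 := hq.one_lt
  obtain ⟨r, n, hr, -, rfl⟩ := hq
  have := Fact.mk hr.nat_prime
  have : CharP F r := charP_of_card_eq_prime_pow (f := n * 2) (by rw [hF, pow_mul])
  set σ := iterateFrobenius F r n
  have hσq : ∀ x, σ x = x ^ r ^ n := iterateFrobenius_def r n
  have hσ : ∀ x, σ (σ x) = x := fun x => by
    rw [hσq, hσq, ← pow_mul, ← sq, ← hF, FiniteField.pow_card]
  have ha : 4 * (σ a * a) = 1 := by
    rw [← h1, pow_succ, ← hσq, map_mul, map_ofNat]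
    ring
  convert ncard_hermitian_inter_parabola σ hq1 (Nat.card_eq_fintype_card.trans hF) hσq hσ ha
    (by rwa [hσq]) using 4
  simp [pow_succ, hσq]

theorem stmt_10 (q : ℕ) (hq : IsPrimePow q) (hodd : Odd q) (F : Type*) [Field F] [Fintype F]
    (hF : Fintype.card F = q ^ 2) (a v : F)
    (h1 : (2 * a) ^ (q + 1) = 1) (h2 : v ^ q + 2 * a * v ≠ 0) :
    Set.ncard {p : F × F | p.1 ^ (q + 1) = p.2 ^ q + p.2 ∧
        p.2 = a * (p.1 + v) ^ 2} = q :=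
  stmt_10_general q hq F hF a v h1 h2
end

section
/- Let q be a power of a prime, let F be the finite field with q² elements, and let 2 ≤ d ≤ q and 1 ≤ j ≤ d−1. Then the number of codewords of weight exactly d of the edge code H^j_d equals q²·(q² − 1)·C(q, d), where C(q,d) is the binomial coefficient. -/
set_option linter.unusedSectionVars false
set_option maxHeartbeats 1000000
open Polynomial Finset

/-- `z : F × F → F` is a codeword of the Hermitian code `H^j_d`: it vanishes outside the
Hermitian curve `x^(q+1) = y^q + y` and is orthogonal to the evaluations of the monomials
`x^r y^s` with `r + s ≤ d - 2` or `(r, s) = (d - 1 - i, i)` for some `0 ≤ i < j`. -/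
def hermitianCodeword (q d j : ℕ) {F : Type*} [Field F] [Fintype F] [DecidableEq F]
    (z : F × F → F) : Prop :=
  (∀ p : F × F, p.1 ^ (q + 1) ≠ p.2 ^ q + p.2 → z p = 0) ∧
  ∀ r s : ℕ, (r + s ≤ d - 2 ∨ ∃ i < j, r = d - 1 - i ∧ s = i) →
    ∑ p ∈ Finset.univ.filter (fun p : F × F => p.1 ^ (q + 1) = p.2 ^ q + p.2),
      z p * p.1 ^ r * p.2 ^ s = 0

/-- The weight of a codeword: the number of points where it does not vanish. -/
def hermitianWeight {F : Type*} [Field F] [Fintype F] [DecidableEq F]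
    (z : F × F → F) : ℕ :=
  (Finset.univ.filter (fun p : F × F => z p ≠ 0)).card

section Aux
variable {F : Type*} [Field F] [Fintype F] [DecidableEq F]


lemma prodXsubC_natDegree (T : Finset F) : (∏ t ∈ T, (X - C t)).natDegree = T.card := by
  rw [natDegree_prod _ _ (fun t _ => X_sub_C_ne_zero t)]
  simp

lemma prodXsubC_eval (T : Finset F) (x : F) :
    (∏ t ∈ T, (X - C t)).eval x = ∏ t ∈ T, (x - t) := by
  simp [eval_prod]

lemma prodXsubC_eval_ne_zero (T : Finset F) (x : F) (hx : x ∉ T) :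
    (∏ t ∈ T, (X - C t)).eval x ≠ 0 := by
  rw [prodXsubC_eval]
  exact prod_ne_zero_iff.2 fun t ht => sub_ne_zero.2 (by rintro rfl; exact hx ht)

lemma prodXsubC_eval_zero (T : Finset F) (x : F) (hx : x ∈ T) :
    (∏ t ∈ T, (X - C t)).eval x = 0 := by
  rw [prodXsubC_eval]
  exact prod_eq_zero hx (sub_self x)

/-- From vanishing of monomial sums, vanishing of polynomial sums. -/
lemma sum_poly_eq_zero (m : ℕ) (S : Finset F) (w : F → F)
    (h : ∀ s ≤ m, ∑ y ∈ S, w y * y ^ s = 0) (P : F[X]) (hP : P.natDegree ≤ m) :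
    ∑ y ∈ S, w y * P.eval y = 0 := by
  have hev : ∀ y : F, P.eval y = ∑ s ∈ range (m + 1), P.coeff s * y ^ s := fun y =>
    eval_eq_sum_range' (lt_of_le_of_lt hP (Nat.lt_succ_self m)) y
  calc ∑ y ∈ S, w y * P.eval y
      = ∑ y ∈ S, ∑ s ∈ range (m + 1), P.coeff s * (w y * y ^ s) := by
        refine Finset.sum_congr rfl fun y _ => ?_
        rw [hev y, Finset.mul_sum]
        exact Finset.sum_congr rfl fun s _ => by ring
    _ = ∑ s ∈ range (m + 1), P.coeff s * ∑ y ∈ S, w y * y ^ s := by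
        rw [Finset.sum_comm]
        exact Finset.sum_congr rfl fun s _ => by rw [Finset.mul_sum]
    _ = 0 := by
        refine Finset.sum_eq_zero fun s hs => ?_
        rw [h s (Nat.lt_succ_iff.mp (mem_range.mp hs)), mul_zero]

/-- Vandermonde-type injectivity: at most `m+1` points, `m+1` moment constraints. -/
lemma vdm_zero (m : ℕ) (S : Finset F) (w : F → F) (hcard : S.card ≤ m + 1)
    (h : ∀ s ≤ m, ∑ y ∈ S, w y * y ^ s = 0) : ∀ y ∈ S, w y = 0 := by
  intro y0 hy0
  have hP := sum_poly_eq_zero m S w h (∏ t ∈ S.erase y0, (X - C t))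
    (by rw [prodXsubC_natDegree]; rw [card_erase_of_mem hy0]; omega)
  rw [Finset.sum_eq_single_of_mem y0 hy0 (fun y hy hne =>
    by rw [prodXsubC_eval_zero _ _ (mem_erase.2 ⟨hne, hy⟩), mul_zero])] at hP
  exact (mul_eq_zero.1 hP).resolve_right
    (prodXsubC_eval_ne_zero _ _ (fun hmem => (mem_erase.1 hmem).1 rfl))




/-- Solutions of the Vandermonde system supported on `S`. -/
def SolP (m : ℕ) (S : Finset F) (w : F → F) : Prop :=
  (∀ y ∉ S, w y = 0) ∧ ∀ s ≤ m, ∑ y ∈ S, w y * y ^ s = 0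

lemma sol_zero_at (m : ℕ) (S : Finset F) (hS : S.card = m + 2) (w : F → F)
    (h : SolP m S w) (y0 : F) (hy0 : y0 ∈ S) (h0 : w y0 = 0) : w = 0 := by
  have herase : ∀ s ≤ m, ∑ y ∈ S.erase y0, w y * y ^ s = 0 := by
    intro s hs
    rw [← h.2 s hs, ← Finset.add_sum_erase S _ hy0, h0, zero_mul, zero_add]
  have hvz := vdm_zero m (S.erase y0) w (by rw [card_erase_of_mem hy0]; omega) herase
  funext y
  by_cases hy : y ∈ S
  · by_cases hyy : y = y0
    · rw [hyy]; exact h0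
    · exact hvz y (mem_erase.2 ⟨hyy, hy⟩)
  · exact h.1 y hy

lemma sol_support (m : ℕ) (S : Finset F) (hS : S.card = m + 2) (w : F → F)
    (h : SolP m S w) (hw : w ≠ 0) : ∀ y ∈ S, w y ≠ 0 :=
  fun y hy h0 => hw (sol_zero_at m S hS w h y hy h0)

lemma sol_exists (m : ℕ) (S : Finset F) (hS : S.card = m + 2) :
    ∃ w : F → F, SolP m S w ∧ w ≠ 0 := by
  -- the moment map from functions on S to m+1 moments is not injective
  have hmap : ¬ Function.Injective (fun (u : {y // y ∈ S} → F) (s : Fin (m + 1)) =>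
      ∑ y ∈ S.attach, u y * (y : F) ^ (s : ℕ)) := by
    intro hinj
    have hcard := Fintype.card_le_of_injective _ hinj
    simp only [Fintype.card_fun, Fintype.card_coe, Fintype.card_fin, hS] at hcard
    have h2 : 2 ≤ Fintype.card F := Fintype.one_lt_card_iff.2 ⟨1, 0, one_ne_zero⟩
    have : Fintype.card F ^ (m+1) < Fintype.card F ^ (m+2) := Nat.pow_lt_pow_right (by omega : 1 < Fintype.card F) (Nat.lt_succ_self (m + 1))
    omega
  rw [Function.not_injective_iff] at hmap
  obtain ⟨u, u', heq, hne⟩ := hmap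
  refine ⟨fun y => if hy : y ∈ S then u ⟨y, hy⟩ - u' ⟨y, hy⟩ else 0, ⟨fun y hy => dif_neg hy, ?_⟩, ?_⟩
  · intro s hs
    have hseq := congrFun heq (⟨s, by omega⟩ : Fin (m + 1))
    simp only at hseq
    rw [← Finset.sum_attach S (fun y => _)]
    calc ∑ y ∈ S.attach, (if hy : (y : F) ∈ S then u ⟨y, hy⟩ - u' ⟨y, hy⟩ else 0) * (y : F) ^ s
        = ∑ y ∈ S.attach, (u y * (y : F) ^ s - u' y * (y : F) ^ s) := by
          refine Finset.sum_congr rfl fun y _ => ?_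
          rw [dif_pos y.2, sub_mul]
      _ = 0 := by rw [Finset.sum_sub_distrib, hseq, sub_self]
  · intro hzero
    obtain ⟨y, hy⟩ := Function.ne_iff.1 hne
    have := congrFun hzero (y : F)
    simp only [dif_pos y.2, Pi.zero_apply, sub_eq_zero] at this
    exact hy this






lemma sol_unique (m : ℕ) (S : Finset F) (hS : S.card = m + 2) (w w' : F → F)
    (h : SolP m S w) (h' : SolP m S w') (hw' : w' ≠ 0) (y0 : F) (hy0 : y0 ∈ S) :
    w = fun y => (w y0 * (w' y0)⁻¹) * w' y := by
  set μ := w y0 * (w' y0)⁻¹ with hμ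
  have hw'y0 := sol_support m S hS w' h' hw' y0 hy0
  have hu : SolP m S (fun y => w y - μ * w' y) := by
    constructor
    · intro y hy; simp only; rw [h.1 y hy, h'.1 y hy, mul_zero, sub_zero]
    · intro s hs
      have : ∑ y ∈ S, (w y - μ * w' y) * y ^ s
          = ∑ y ∈ S, w y * y ^ s - μ * ∑ y ∈ S, w' y * y ^ s := by
        rw [Finset.mul_sum, ← Finset.sum_sub_distrib]
        exact Finset.sum_congr rfl fun y _ => by ring
      rw [this, h.2 s hs, h'.2 s hs, mul_zero, sub_zero]
  have h0 : w y0 - μ * w' y0 = 0 := by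
    rw [hμ, mul_assoc, inv_mul_cancel₀ hw'y0, mul_one, sub_self]
  have := sol_zero_at m S hS _ hu y0 hy0 h0
  funext y
  have := congrFun this y
  simp only [Pi.zero_apply, sub_eq_zero] at this
  exact this

open Classical in
noncomputable def wSol (m : ℕ) (S : Finset F) : F → F :=
  if h : ∃ w : F → F, SolP m S w ∧ w ≠ 0 then h.choose else 0

lemma wSol_spec (m : ℕ) (S : Finset F) (hS : S.card = m + 2) :
    SolP m S (wSol m S) ∧ wSol m S ≠ 0 := by
  rw [wSol]
  rw [dif_pos (sol_exists m S hS)]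
  exact (sol_exists m S hS).choose_spec



lemma root_card_le (q : ℕ) (hq : 2 ≤ q) (b c : F) :
    (univ.filter (fun y : F => y ^ q + b * y = c)).card ≤ q := by
  classical
  set P : F[X] := X ^ q + C b * X - C c with hP
  have hPne : P ≠ 0 := by
    intro h0
    have h1 : P.coeff q = 0 := by rw [h0]; simp
    rw [hP] at h1
    simp only [coeff_sub, coeff_add, coeff_X_pow, if_pos rfl, coeff_C_mul, coeff_X, coeff_C,
      if_neg (by omega : ¬(1 : ℕ) = q), if_neg (by omega : ¬q = 0), mul_zero, add_zero,
      sub_zero] at h1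
    exact one_ne_zero h1
  have hdeg : P.natDegree ≤ q := by
    rw [hP]
    refine le_trans (natDegree_sub_le _ _) ?_
    simp only [natDegree_C, max_le_iff]
    refine ⟨le_trans (natDegree_add_le _ _) ?_, by omega⟩
    simp only [natDegree_X_pow, max_le_iff]
    refine ⟨le_rfl, le_trans (natDegree_mul_le) ?_⟩
    simp only [natDegree_C, natDegree_X]
    omega
  calc (univ.filter (fun y : F => y ^ q + b * y = c)).card
      ≤ P.roots.toFinset.card := by
        apply Finset.card_le_card
        intro y hy
        rw [mem_filter] at hy
        rw [Multiset.mem_toFinset, mem_roots hPne]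
        simp [hP, IsRoot, hy.2, sub_eq_zero]
    _ ≤ Multiset.card P.roots := P.roots.toFinset_card_le
    _ ≤ P.natDegree := P.card_roots'
    _ ≤ q := hdeg

lemma fiber_card (q p n : ℕ) (hp : p.Prime) (hn : 0 < n) (hpq : p ^ n = q)
    (hF : Fintype.card F = q ^ 2) (a : F) :
    (univ.filter (fun y : F => y ^ q + y = a ^ (q + 1))).card = q := by
  classical
  have hq2 : 2 ≤ q := by
    have := Nat.one_lt_pow (by omega : n ≠ 0) hp.two_le
    omega
  -- the characteristic of F is p
  obtain ⟨n', hrprime, hcard'⟩ := FiniteField.card F (ringChar F)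
  have hpr : p = ringChar F := by
    have hdvd : p ∣ ringChar F ^ (n' : ℕ) := by
      rw [← hcard', hF, ← hpq, ← pow_mul]
      exact dvd_pow_self p (by positivity)
    exact ((Nat.prime_dvd_prime_iff_eq hp hrprime).1 (hp.dvd_of_dvd_pow hdvd))
  haveI : Fact p.Prime := ⟨hp⟩
  haveI : CharP F p := hpr ▸ ringChar.charP F
  have hadd : ∀ u v : F, (u + v) ^ q = u ^ q + v ^ q := by
    intro u v; rw [← hpq]; exact add_pow_char_pow u v p n
  have hsub : ∀ u v : F, (u - v) ^ q = u ^ q - v ^ q := by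
    intro u v; rw [← hpq]; exact sub_pow_char_pow u v n
  have hpow : ∀ y : F, (y ^ q) ^ q = y := by
    intro y
    rw [← pow_mul, ← pow_two]
    rw [← hF]
    exact FiniteField.pow_card y
  -- image of the trace map equals fixed points of y ↦ y^q
  set Img : Finset F := univ.image (fun y : F => y ^ q + y) with hImg
  set Fix : Finset F := univ.filter (fun c : F => c ^ q = c) with hFix
  set K : Finset F := univ.filter (fun y : F => y ^ q + y = 0) with hK
  have hImgFix : Img ⊆ Fix := by
    intro c hc
    rw [hImg, mem_image] at hc
    obtain ⟨y, _, rfl⟩ := hc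
    rw [hFix, mem_filter]
    exact ⟨mem_univ _, by rw [hadd, hpow]; ring⟩
  have hFixcard : Fix.card ≤ q := by
    have := root_card_le (F := F) q hq2 (-1) 0
    have heq : Fix = univ.filter (fun y : F => y ^ q + (-1) * y = 0) := by
      rw [hFix]
      apply Finset.filter_congr
      intro y _
      simp only [neg_one_mul, eq_iff_iff]
      constructor
      · intro h; rw [h]; ring
      · intro h; have : y ^ q = y := by linear_combination h
        exact this
    rw [heq]; exact this
  have hKcard : K.card ≤ q := by
    have := root_card_le (F := F) q hq2 1 0
    have heq : K = univ.filter (fun y : F => y ^ q + 1 * y = 0) := by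
      rw [hK]; apply Finset.filter_congr; intro y _; rw [one_mul]
    rw [heq]; exact this
  -- each nonempty fiber has card K.card
  have hfib : ∀ c ∈ Img, (univ.filter (fun y : F => y ^ q + y = c)).card = K.card := by
    intro c hc
    rw [hImg, mem_image] at hc
    obtain ⟨y0, _, hy0⟩ := hc
    apply Finset.card_bij (fun y _ => y - y0)
    · intro y hy
      rw [mem_filter] at hy
      rw [hK, mem_filter]
      refine ⟨mem_univ _, ?_⟩
      rw [hsub]
      rw [← hy0] at hy
      linear_combination hy.2
    · intro y hy y' hy' h
      exact sub_left_injective h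
    · intro t ht
      rw [hK, mem_filter] at ht
      refine ⟨t + y0, ?_, by ring⟩
      rw [mem_filter]
      refine ⟨mem_univ _, ?_⟩
      rw [hadd, ← hy0]
      linear_combination ht.2
  -- counting
  have hcount : q ^ 2 = Img.card * K.card := by
    rw [← hF, ← Finset.card_univ, Finset.card_eq_sum_card_image (fun y : F => y ^ q + y) univ]
    rw [← hImg]
    rw [Finset.sum_congr rfl (fun c hc => hfib c hc)]
    rw [Finset.sum_const, smul_eq_mul]
  have hq0 : 0 < q := by omega
  have hImgq : Img.card = q ∧ K.card = q := by
    have h1 : Img.card ≤ q := le_trans (Finset.card_le_card hImgFix) hFixcard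
    constructor <;> nlinarith [hcount, h1, hKcard]
  -- a^(q+1) is fixed by y ↦ y^q
  have hfixa : a ^ (q + 1) ∈ Fix := by
    rw [hFix, mem_filter]
    refine ⟨mem_univ _, ?_⟩
    calc (a ^ (q + 1)) ^ q = (a ^ q) ^ q * a ^ q := by
          rw [← pow_mul, ← pow_mul, ← pow_add]; ring_nf
      _ = a ^ (q + 1) := by rw [hpow]; ring
  have hImgFixEq : Img = Fix := Finset.eq_of_subset_of_card_le hImgFix
    (by rw [hImgq.1]; exact hFixcard)
  have : a ^ (q + 1) ∈ Img := hImgFixEq ▸ hfixa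
  rw [hfib _ this, hImgq.2]



/-- Bivariate version: vanishing of product-polynomial sums from monomial sums. -/
lemma biv_poly_sum (Z : Finset (F × F)) (z : F × F → F) (dp dq : ℕ)
    (h : ∀ r ≤ dp, ∀ s ≤ dq, ∑ pt ∈ Z, z pt * pt.1 ^ r * pt.2 ^ s = 0)
    (P Q : F[X]) (hP : P.natDegree ≤ dp) (hQ : Q.natDegree ≤ dq) :
    ∑ pt ∈ Z, z pt * P.eval pt.1 * Q.eval pt.2 = 0 := by
  have hevP : ∀ x : F, P.eval x = ∑ r ∈ range (dp + 1), P.coeff r * x ^ r := fun x =>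
    eval_eq_sum_range' (lt_of_le_of_lt hP (Nat.lt_succ_self dp)) x
  have hevQ : ∀ x : F, Q.eval x = ∑ s ∈ range (dq + 1), Q.coeff s * x ^ s := fun x =>
    eval_eq_sum_range' (lt_of_le_of_lt hQ (Nat.lt_succ_self dq)) x
  calc ∑ pt ∈ Z, z pt * P.eval pt.1 * Q.eval pt.2
      = ∑ pt ∈ Z, ∑ r ∈ range (dp + 1), ∑ s ∈ range (dq + 1),
          (P.coeff r * Q.coeff s) * (z pt * pt.1 ^ r * pt.2 ^ s) := by
        refine Finset.sum_congr rfl fun pt _ => ?_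
        rw [hevP, hevQ, mul_assoc, Finset.sum_mul_sum]
        rw [Finset.mul_sum]
        refine Finset.sum_congr rfl fun r _ => ?_
        rw [Finset.mul_sum]
        refine Finset.sum_congr rfl fun s _ => by ring
    _ = ∑ r ∈ range (dp + 1), ∑ s ∈ range (dq + 1),
          (P.coeff r * Q.coeff s) * ∑ pt ∈ Z, z pt * pt.1 ^ r * pt.2 ^ s := by
        rw [Finset.sum_comm]
        refine Finset.sum_congr rfl fun r _ => ?_
        rw [Finset.sum_comm]
        refine Finset.sum_congr rfl fun s _ => by rw [Finset.mul_sum]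
    _ = 0 := by
        refine Finset.sum_eq_zero fun r hr => Finset.sum_eq_zero fun s hs => ?_
        rw [h r (Nat.lt_succ_iff.mp (mem_range.mp hr)) s (Nat.lt_succ_iff.mp (mem_range.mp hs)),
          mul_zero]

/-- The support of a minimum-weight codeword of an edge code lies on a vertical line. -/
lemma same_line (q d j : ℕ) (hd : 2 ≤ d) (hj1 : 1 ≤ j)
    (z : F × F → F) (hz : hermitianCodeword q d j z) (hw : hermitianWeight z = d) :
    ∀ p1 p2 : F × F, z p1 ≠ 0 → z p2 ≠ 0 → p1.1 = p2.1 := by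
  classical
  set Z : Finset (F × F) := univ.filter (fun pt => z pt ≠ 0) with hZ
  have hZcard : Z.card = d := hw
  have hZsub : Z ⊆ univ.filter (fun pt : F × F => pt.1 ^ (q + 1) = pt.2 ^ q + pt.2) := by
    intro pt hpt
    rw [hZ, mem_filter] at hpt
    rw [mem_filter]
    refine ⟨mem_univ _, ?_⟩
    by_contra hcurve
    exact hpt.2 (hz.1 pt hcurve)
  have hsum : ∀ r s : ℕ, (r + s ≤ d - 2 ∨ ∃ i < j, r = d - 1 - i ∧ s = i) →
      ∑ pt ∈ Z, z pt * pt.1 ^ r * pt.2 ^ s = 0 := by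
    intro r s hrs
    rw [← hz.2 r s hrs]
    apply Finset.sum_subset hZsub
    intro pt _ hpt
    rw [hZ, mem_filter] at hpt
    push_neg at hpt
    rw [hpt (mem_univ _), zero_mul, zero_mul]
  by_contra hcon
  push_neg at hcon
  obtain ⟨p1, p2, hz1, hz2, hne⟩ := hcon
  -- the set of x-coordinates
  set A : Finset F := Z.image Prod.fst with hA
  set k := A.card with hk
  have hp1 : p1 ∈ Z := by rw [hZ, mem_filter]; exact ⟨mem_univ _, hz1⟩
  have hp2 : p2 ∈ Z := by rw [hZ, mem_filter]; exact ⟨mem_univ _, hz2⟩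
  have hk2 : 2 ≤ k := by
    rw [hk]
    exact Finset.one_lt_card.2 ⟨p1.1, mem_image_of_mem _ hp1, p2.1, mem_image_of_mem _ hp2, hne⟩
  set nn : F → ℕ := fun a => (Z.filter (fun pt => pt.1 = a)).card with hnn
  have hsum_n : ∑ a ∈ A, nn a = d := by
    rw [← hZcard, hA]
    exact (Finset.card_eq_sum_card_image Prod.fst Z).symm
  have hn_pos : ∀ a ∈ A, 1 ≤ nn a := by
    intro a ha
    rw [hA, mem_image] at ha
    obtain ⟨pt, hpt, rfl⟩ := ha
    rw [hnn]
    exact Finset.card_pos.2 ⟨pt, mem_filter.2 ⟨hpt, rfl⟩⟩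
  have hkd : k ≤ d := by
    calc k = ∑ _a ∈ A, 1 := by simp [hk]
      _ ≤ ∑ a ∈ A, nn a := Finset.sum_le_sum hn_pos
      _ = d := hsum_n
  -- the key killing argument
  have key : ∀ a0 ∈ A,
      (∀ r s : ℕ, r ≤ k - 1 → s ≤ nn a0 - 1 →
        (r + s ≤ d - 2 ∨ ∃ i < j, r = d - 1 - i ∧ s = i)) → False := by
    intro a0 ha0 hallowed
    -- points in the group of a0
    obtain ⟨pt0, hpt0⟩ : ∃ pt0, pt0 ∈ Z.filter (fun pt => pt.1 = a0) := by
      rw [hA, mem_image] at ha0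
      obtain ⟨pt, hpt, rfl⟩ := ha0
      exact ⟨pt, mem_filter.2 ⟨hpt, rfl⟩⟩
    rw [mem_filter] at hpt0
    obtain ⟨hpt0Z, hpt0a⟩ := hpt0
    set B : Finset F := ((Z.filter (fun pt => pt.1 = a0)).image Prod.snd).erase pt0.2 with hB
    have hGcard : ((Z.filter (fun pt => pt.1 = a0)).image Prod.snd).card = nn a0 := by
      rw [hnn]
      apply Finset.card_image_of_injOn
      intro u hu v hv huv
      simp only [Finset.mem_coe, mem_filter] at hu hv
      exact Prod.ext (hu.2.trans hv.2.symm) huv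
    have hBcard : B.card = nn a0 - 1 := by
      rw [hB, card_erase_of_mem (mem_image_of_mem _ (mem_filter.2 ⟨hpt0Z, hpt0a⟩)), hGcard]
    set P : F[X] := ∏ t ∈ A.erase a0, (X - C t) with hP
    set Q : F[X] := ∏ t ∈ B, (X - C t) with hQ
    have hPdeg : P.natDegree ≤ k - 1 := by
      rw [hP, prodXsubC_natDegree, card_erase_of_mem ha0, hk]
    have hQdeg : Q.natDegree ≤ nn a0 - 1 := by
      rw [hQ, prodXsubC_natDegree, hBcard]
    have hzero := biv_poly_sum Z z (k - 1) (nn a0 - 1)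
      (fun r hr s hs => hsum r s (hallowed r s hr hs)) P Q hPdeg hQdeg
    rw [Finset.sum_eq_single_of_mem pt0 hpt0Z] at hzero
    · have hPne : P.eval pt0.1 ≠ 0 := by
        rw [hP, hpt0a]
        exact prodXsubC_eval_ne_zero _ _ (fun hmem => (mem_erase.1 hmem).1 rfl)
      have hQne : Q.eval pt0.2 ≠ 0 := by
        rw [hQ]
        exact prodXsubC_eval_ne_zero _ _ (fun hmem => (mem_erase.1 hmem).1 rfl)
      have hzpt0 : z pt0 ≠ 0 := (mem_filter.1 hpt0Z).2
      exact hzpt0 (by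
        have := mul_eq_zero.1 hzero
        rcases this with h1 | h1
        · rcases mul_eq_zero.1 h1 with h2 | h2
          · exact h2
          · exact absurd h2 hPne
        · exact absurd h1 hQne)
    · intro pt hpt hptne
      by_cases hx : pt.1 = a0
      · have : pt.2 ∈ B := by
          rw [hB, mem_erase]
          refine ⟨?_, mem_image_of_mem _ (mem_filter.2 ⟨hpt, hx⟩)⟩
          intro h2
          exact hptne (Prod.ext (hx.trans hpt0a.symm) h2)
        rw [hQ, prodXsubC_eval_zero _ _ this, mul_zero]
      · have : pt.1 ∈ A.erase a0 := mem_erase.2 ⟨hx, mem_image_of_mem _ hpt⟩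
        rw [hP, prodXsubC_eval_zero _ _ this, mul_zero, zero_mul]
  -- case analysis
  by_cases hcase : ∃ a ∈ A, nn a + k ≤ d
  · obtain ⟨a0, ha0, hle⟩ := hcase
    refine key a0 ha0 fun r s hr hs => Or.inl ?_
    have := hn_pos a0 ha0
    omega
  · push_neg at hcase
    have hlow : ∀ a ∈ A, d + 1 - k ≤ nn a := fun a ha => by
      have := hcase a ha; omega
    have hbig : k * (d + 1 - k) ≤ d := by
      calc k * (d + 1 - k) = ∑ _a ∈ A, (d + 1 - k) := by rw [Finset.sum_const, smul_eq_mul, hk]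
        _ ≤ ∑ a ∈ A, nn a := Finset.sum_le_sum hlow
        _ = d := hsum_n
    have hkeq : k = d := by
      by_contra hne2
      have hklt : k < d := lt_of_le_of_ne hkd hne2
      obtain ⟨e, he⟩ : ∃ e, d = k + e ∧ 1 ≤ e := ⟨d - k, by omega, by omega⟩
      have h1 : k * (d + 1 - k) = k * e + k := by
        have : d + 1 - k = e + 1 := by omega
        rw [this]; ring
      have h2 : 2 * e ≤ k * e := Nat.mul_le_mul_right e hk2
      omega
    -- all groups are singletons
    have hall1 : ∀ a ∈ A, nn a = 1 := by
      intro a ha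
      by_contra hne1
      have h2 : 2 ≤ nn a := by have := hn_pos a ha; omega
      have h3 : ∑ a' ∈ A, nn a' = nn a + ∑ a' ∈ A.erase a, nn a' :=
        (Finset.add_sum_erase A nn ha).symm
      have h4 : (A.erase a).card ≤ ∑ a' ∈ A.erase a, nn a' := by
        calc (A.erase a).card = ∑ _a ∈ A.erase a, 1 := by simp
          _ ≤ _ := Finset.sum_le_sum (fun a' ha' => hn_pos a' (mem_of_mem_erase ha'))
      have h5 : (A.erase a).card = k - 1 := by rw [card_erase_of_mem ha, hk]
      omega
    refine key p1.1 (mem_image_of_mem _ hp1) fun r s hr hs => ?_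
    rw [hall1 p1.1 (mem_image_of_mem _ hp1)] at hs
    have hs0 : s = 0 := by omega
    by_cases hr2 : r ≤ d - 2
    · exact Or.inl (by omega)
    · refine Or.inr ⟨0, by omega, by omega, hs0⟩



/-- Sum over the curve of a function supported on a vertical line. -/
lemma line_sum (q : ℕ) (a : F) (f : F × F → F)
    (h1 : ∀ pt : F × F, pt.1 ≠ a → f pt = 0)
    (h2 : ∀ y : F, a ^ (q + 1) ≠ y ^ q + y → f (a, y) = 0) :
    ∑ pt ∈ univ.filter (fun pt : F × F => pt.1 ^ (q + 1) = pt.2 ^ q + pt.2), f pt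
      = ∑ y : F, f (a, y) := by
  have step1 : ∑ pt ∈ univ.filter (fun pt : F × F => pt.1 ^ (q + 1) = pt.2 ^ q + pt.2), f pt
      = ∑ pt : F × F, f pt := by
    apply Finset.sum_subset (Finset.filter_subset _ _)
    intro pt _ hpt
    rw [mem_filter] at hpt
    push_neg at hpt
    by_cases hx : pt.1 = a
    · have : pt = (a, pt.2) := Prod.ext hx rfl
      rw [this]
      exact h2 pt.2 (by rw [← hx]; exact hpt (mem_univ _))
    · exact h1 pt hx
  rw [step1, Fintype.sum_prod_type]
  rw [Finset.sum_eq_single_of_mem a (mem_univ a)]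
  intro x _ hxa
  exact Finset.sum_eq_zero fun y _ => h1 (x, y) hxa

/-- The codeword supported on the vertical line `x = a`. -/
noncomputable def gword (d : ℕ) (a μ : F) (S : Finset F) : F × F → F :=
  fun pt => if pt.1 = a then μ * wSol (d - 2) S pt.2 else 0

lemma gword_mem (q d j : ℕ) (hd : 2 ≤ d) (hj2 : j ≤ d - 1) (a μ : F) (hμ : μ ≠ 0)
    (S : Finset F) (hSsub : S ⊆ univ.filter (fun y : F => y ^ q + y = a ^ (q + 1)))
    (hScard : S.card = d) :
    hermitianCodeword q d j (gword d a μ S) ∧ hermitianWeight (gword d a μ S) = d := by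
  have hm : d - 2 + 2 = d := by omega
  obtain ⟨hsol, hne⟩ := wSol_spec (F := F) (d - 2) S (by omega)
  have hws : ∀ y : F, wSol (d - 2) S y ≠ 0 ↔ y ∈ S := by
    intro y
    constructor
    · intro hy
      by_contra hyS
      exact hy (hsol.1 y hyS)
    · intro hy
      exact sol_support (d - 2) S (by omega) _ hsol hne y hy
  have hSfib : ∀ y ∈ S, y ^ q + y = a ^ (q + 1) := by
    intro y hy
    have := hSsub hy
    rw [mem_filter] at this
    exact this.2
  refine ⟨⟨?_, ?_⟩, ?_⟩
  · -- vanishes off the curve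
    intro pt hpt
    rw [gword]
    by_cases hx : pt.1 = a
    · rw [if_pos hx]
      have hyS : pt.2 ∉ S := by
        intro hyS
        exact hpt (by rw [hx, hSfib pt.2 hyS])
      rw [hsol.1 pt.2 hyS, mul_zero]
    · exact if_neg hx
  · -- orthogonality
    intro r s hrs
    have hs : s ≤ d - 2 := by
      rcases hrs with h | ⟨i, hi, _, rfl⟩
      · omega
      · omega
    rw [line_sum q a _ (fun pt hpt => by rw [gword, if_neg hpt, zero_mul, zero_mul])
      (fun y hy => by
        rw [gword]
        simp only [eq_self_iff_true, if_true]
        have hyS : y ∉ S := fun hyS => hy (hSfib y hyS).symm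
        rw [hsol.1 y hyS, mul_zero, zero_mul, zero_mul])]
    have : ∀ y : F, gword d a μ S (a, y) * (a, y).1 ^ r * (a, y).2 ^ s
        = (μ * a ^ r) * (wSol (d - 2) S y * y ^ s) := by
      intro y
      rw [gword]
      simp only [eq_self_iff_true, if_true]
      ring
    rw [Finset.sum_congr rfl fun y _ => this y, ← Finset.mul_sum]
    have hzero : ∑ y : F, wSol (d - 2) S y * y ^ s = 0 := by
      rw [← Finset.sum_subset (Finset.subset_univ S)
        (fun y _ hyS => by rw [hsol.1 y hyS, zero_mul])]
      exact hsol.2 s hs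
    rw [hzero, mul_zero]
  · -- weight
    rw [hermitianWeight]
    have : univ.filter (fun pt : F × F => gword d a μ S pt ≠ 0)
        = S.image (fun y => (a, y)) := by
      ext pt
      rw [mem_filter, mem_image]
      constructor
      · rintro ⟨-, hpt⟩
        rw [gword] at hpt
        by_cases hx : pt.1 = a
        · rw [if_pos hx] at hpt
          have : wSol (d - 2) S pt.2 ≠ 0 := fun h0 => hpt (by rw [h0, mul_zero])
          refine ⟨pt.2, (hws pt.2).1 this, ?_⟩
          exact Prod.ext hx.symm rfl
        · rw [if_neg hx] at hpt
          exact absurd rfl hpt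
      · rintro ⟨y, hyS, rfl⟩
        refine ⟨mem_univ _, ?_⟩
        rw [gword]
        simp only [eq_self_iff_true, if_true]
        exact mul_ne_zero hμ ((hws y).2 hyS)
    rw [this, Finset.card_image_of_injective _ (fun u v huv => (Prod.ext_iff.1 huv).2), hScard]


end Aux

theorem stmt_13 (q d j : ℕ) (hq : IsPrimePow q) (hd : 2 ≤ d) (hdq : d ≤ q)
    (hj1 : 1 ≤ j) (hj2 : j ≤ d - 1)
    (F : Type*) [Field F] [Fintype F] [DecidableEq F] (hF : Fintype.card F = q ^ 2) :
    Nat.card {z : F × F → F // hermitianCodeword q d j z ∧ hermitianWeight z = d}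
      = q ^ 2 * (q ^ 2 - 1) * Nat.choose q d := by
  classical
  obtain ⟨p, n, hp0, hn, hpq⟩ := hq
  have hp : p.Prime := Nat.prime_iff.mpr hp0
  have hq2 : 2 ≤ q := by
    have := Nat.one_lt_pow (by omega : n ≠ 0) hp.two_le
    omega
  rw [Nat.card_eq_fintype_card, Fintype.card_subtype]
  -- the parameter set: a point a, a d-subset of the fiber over a, a nonzero scalar
  set fib : F → Finset F := fun a => univ.filter (fun y : F => y ^ q + y = a ^ (q + 1))
    with hfib
  set T : Finset ((Σ _ : F, Finset F) × F) :=
    ((univ : Finset F).sigma (fun a => (fib a).powersetCard d)) ×ˢ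
      (univ.filter (fun μ : F => μ ≠ 0)) with hT
  have hfibcard : ∀ a : F, (fib a).card = q := fun a => fiber_card q p n hp hn hpq hF a
  have hTcard : T.card = q ^ 2 * (q ^ 2 - 1) * q.choose d := by
    rw [hT, Finset.card_product, Finset.card_sigma]
    have h1 : ∀ a : F, ((fib a).powersetCard d).card = q.choose d := by
      intro a
      rw [Finset.card_powersetCard, hfibcard a]
    rw [Finset.sum_congr rfl fun a _ => h1 a, Finset.sum_const, smul_eq_mul]
    have h2 : (univ.filter (fun μ : F => μ ≠ 0)).card = q ^ 2 - 1 := by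
      rw [Finset.filter_ne', Finset.card_erase_of_mem (mem_univ 0), Finset.card_univ, hF]
    rw [h2, Finset.card_univ, hF]
    ring
  rw [← hTcard]
  symm
  apply Finset.card_bij (fun x _ => gword d x.1.1 x.2 x.1.2)
  · -- membership
    rintro ⟨⟨a, S⟩, μ⟩ hx
    rw [hT, Finset.mem_product, Finset.mem_sigma, Finset.mem_powersetCard] at hx
    dsimp only at hx
    obtain ⟨⟨-, hSsub, hScard⟩, hμ⟩ := hx
    rw [Finset.mem_filter] at hμ
    rw [Finset.mem_filter]
    exact ⟨mem_univ _, gword_mem q d j hd hj2 a μ hμ.2 S hSsub hScard⟩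
  · -- injectivity
    rintro ⟨⟨a, S⟩, μ⟩ hx ⟨⟨a', S'⟩, μ'⟩ hx' heq
    rw [hT, Finset.mem_product, Finset.mem_sigma, Finset.mem_powersetCard] at hx hx'
    dsimp only at hx hx'
    obtain ⟨⟨-, hSsub, hScard⟩, hμ⟩ := hx
    obtain ⟨⟨-, hSsub', hScard'⟩, hμ'⟩ := hx'
    rw [Finset.mem_filter] at hμ hμ'
    have hμ0 : μ ≠ 0 := hμ.2
    have hμ0' : μ' ≠ 0 := hμ'.2
    obtain ⟨hsol, hne⟩ := wSol_spec (F := F) (d - 2) S (by omega)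
    obtain ⟨hsol', hne'⟩ := wSol_spec (F := F) (d - 2) S' (by omega)
    have hSne : S.Nonempty := Finset.card_pos.1 (by omega)
    obtain ⟨y0, hy0⟩ := hSne
    have hwy0 : wSol (d - 2) S y0 ≠ 0 :=
      sol_support (d - 2) S (by omega) _ hsol hne y0 hy0
    have haa : a = a' := by
      by_contra haa
      have := congrFun heq (a, y0)
      rw [gword, gword] at this
      simp only [eq_self_iff_true, if_true] at this
      rw [if_neg haa] at this
      exact mul_ne_zero hμ0 hwy0 this
    subst haa
    have hSS : S = S' := by
      ext y
      have h1 := congrFun heq (a, y)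
      rw [gword, gword] at h1
      simp only [eq_self_iff_true, if_true] at h1
      constructor
      · intro hy
        by_contra hy'
        rw [hsol'.1 y hy', mul_zero] at h1
        exact mul_ne_zero hμ0 (sol_support (d - 2) S (by omega) _ hsol hne y hy) h1
      · intro hy
        by_contra hy'
        rw [hsol.1 y hy', mul_zero] at h1
        exact mul_ne_zero hμ0' (sol_support (d - 2) S' (by omega) _ hsol' hne' y hy) h1.symm
    subst hSS
    have hμμ : μ = μ' := by
      have h1 := congrFun heq (a, y0)
      rw [gword, gword] at h1
      simp only [eq_self_iff_true, if_true] at h1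
      exact mul_right_cancel₀ hwy0 h1
    subst hμμ
    rfl
  · -- surjectivity
    intro z hzmem
    rw [Finset.mem_filter] at hzmem
    obtain ⟨-, hz, hwt⟩ := hzmem
    set Z : Finset (F × F) := univ.filter (fun pt => z pt ≠ 0) with hZ
    have hZcard : Z.card = d := hwt
    have hZne : Z.Nonempty := Finset.card_pos.1 (by omega)
    obtain ⟨p0, hp0⟩ := hZne
    have hzp0 : z p0 ≠ 0 := (Finset.mem_filter.1 hp0).2
    set a : F := p0.1 with ha
    have hline : ∀ pt ∈ Z, pt.1 = a :=
      fun pt hpt => same_line q d j hd hj1 z hz hwt pt p0 (Finset.mem_filter.1 hpt).2 hzp0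
    set S : Finset F := Z.image Prod.snd with hS
    have hmemS : ∀ y : F, y ∈ S ↔ z (a, y) ≠ 0 := by
      intro y
      rw [hS, Finset.mem_image]
      constructor
      · rintro ⟨pt, hpt, rfl⟩
        have : pt = (a, pt.2) := Prod.ext (hline pt hpt) rfl
        rw [← this]
        exact (Finset.mem_filter.1 hpt).2
      · intro hy
        exact ⟨(a, y), Finset.mem_filter.2 ⟨mem_univ _, hy⟩, rfl⟩
    have hScard : S.card = d := by
      rw [hS, ← hZcard]
      apply Finset.card_image_of_injOn
      intro u hu v hv huv
      simp only [Finset.mem_coe] at hu hv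
      exact Prod.ext ((hline u hu).trans (hline v hv).symm) huv
    have hSsub : S ⊆ fib a := by
      intro y hy
      rw [hfib, Finset.mem_filter]
      refine ⟨mem_univ _, ?_⟩
      have hcurve : ¬ ((a, y).1 ^ (q + 1) ≠ (a, y).2 ^ q + (a, y).2) := by
        intro hcon
        exact ((hmemS y).1 hy) (hz.1 (a, y) hcon)
      push_neg at hcurve
      exact hcurve.symm
    -- the restricted word satisfies the Vandermonde system
    have hwoff : ∀ y ∉ S, z (a, y) = 0 := by
      intro y hy
      by_contra h0
      exact hy ((hmemS y).2 h0)
    have hsolw : SolP (d - 2) S (fun y => z (a, y)) := by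
      refine ⟨hwoff, ?_⟩
      intro s hs
      have h0 := hz.2 0 s (Or.inl (by omega))
      rw [line_sum q a _ (fun pt hpt => by
          have : z pt = 0 := by
            by_contra hcon
            exact hpt (hline pt (Finset.mem_filter.2 ⟨mem_univ _, hcon⟩))
          rw [this, zero_mul, zero_mul])
        (fun y hy => by rw [hz.1 (a, y) hy, zero_mul, zero_mul])] at h0
      have heq2 : ∀ y : F, z (a, y) * (a, y).1 ^ 0 * (a, y).2 ^ s = z (a, y) * y ^ s := by
        intro y
        rw [pow_zero, mul_one]
      rw [Finset.sum_congr rfl fun y _ => heq2 y] at h0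
      rw [← Finset.sum_subset (Finset.subset_univ S) (fun y _ hyS => by
        rw [hwoff y hyS, zero_mul])] at h0
      exact h0
    -- compare with the canonical solution
    obtain ⟨hsol, hne⟩ := wSol_spec (F := F) (d - 2) S (by omega)
    have hy0S : p0.2 ∈ S := (hmemS p0.2).2 (by
      have : (a, p0.2) = p0 := Prod.ext rfl rfl
      rw [this]; exact hzp0)
    have hwy0 : wSol (d - 2) S p0.2 ≠ 0 :=
      sol_support (d - 2) S (by omega) _ hsol hne p0.2 hy0S
    have huniq := sol_unique (d - 2) S (by omega) (fun y => z (a, y)) (wSol (d - 2) S)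
      hsolw hsol hne p0.2 hy0S
    set μ : F := z (a, p0.2) * (wSol (d - 2) S p0.2)⁻¹ with hμ
    have hμ0 : μ ≠ 0 := by
      rw [hμ]
      apply mul_ne_zero
      · have : (a, p0.2) = p0 := Prod.ext rfl rfl
        rw [this]; exact hzp0
      · exact inv_ne_zero hwy0
    refine ⟨⟨⟨a, S⟩, μ⟩, ?_, ?_⟩
    · rw [hT, Finset.mem_product, Finset.mem_sigma, Finset.mem_powersetCard]
      exact ⟨⟨mem_univ _, hSsub, hScard⟩, Finset.mem_filter.2 ⟨mem_univ _, hμ0⟩⟩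
    · funext pt
      rw [gword]
      by_cases hx : pt.1 = a
      · rw [if_pos hx]
        have h1 := congrFun huniq pt.2
        have h2 : (a, pt.2) = pt := Prod.ext hx.symm rfl
        rw [h2] at h1
        rw [← h1]
      · rw [if_neg hx]
        by_contra hcon
        exact hx (hline pt (Finset.mem_filter.2 ⟨mem_univ _, fun h0 => hcon h0.symm⟩))
end
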